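/- arXiv:1712.07746 — 9 statements merged into one kernel-verified Lean document; each statement's English description precedes it below -/
import Mathlib

section
/- Let M be a finitely generated monoid. Then M is graded if and only if every element of M has only finitely many nontrivial factorizations, i.e., for every u ∈ M the set of finite sequences (u₁,…,uₙ) of non-identity elements of M with u = u₁⋯uₙ is finite. -/
/-!
Lifting every factor of a nontrivial factorization of `u` along a section of a surjection
`α : FreeMonoid X →* M` gives a factorization of a word in the fibre `α ⁻¹' {u}` into nonempty
words; a word `w` has only finitely many of those (at most `|w|` pieces, each a sublist of `w`),
so finite fibres give finitely many factorizations. Conversely, for generators different from `1`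
each word in `α ⁻¹' {u}` spells out a nontrivial factorization of `u`, and over a finite alphabet
only finitely many words spell out a given one.
-/

def IsGraded (M : Type*) [Monoid M] : Prop :=
  ∃ (X : Type) (_ : Finite X) (α : FreeMonoid X →* M),
    Function.Surjective α ∧ ∀ m : M, (α ⁻¹' {m}).Finite

def nontrivialFactorizations {M : Type*} [Monoid M] (u : M) : Set (List M) :=
  {l | (∀ x ∈ l, x ≠ 1) ∧ l.prod = u}

theorem Set.Finite.setOf_length_le_forall_mem {α : Type*} {s : Set α} (hs : s.Finite) (n : ℕ) :
    {l : List α | l.length ≤ n ∧ ∀ x ∈ l, x ∈ s}.Finite := by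
  have := hs.to_subtype
  refine ((List.finite_length_le s n).image (List.map Subtype.val)).subset ?_
  rintro l ⟨hlen, hmem⟩
  exact ⟨l.pmap Subtype.mk hmem, by simpa using hlen, by simp [List.map_pmap]⟩

theorem List.finite_setOf_flatten_eq {α : Type*} (l : List α) :
    {L : List (List α) | (∀ v ∈ L, v ≠ []) ∧ L.flatten = l}.Finite := by
  refine (l.sublists.finite_toSet.setOf_length_le_forall_mem l.length).subset ?_
  rintro L ⟨hne, rfl⟩
  refine ⟨?_, fun v hv => List.mem_sublists.2 (List.sublist_flatten_of_mem hv)⟩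
  rw [List.length_flatten, ← List.length_map List.length]
  refine List.length_le_sum_of_one_le _ fun i hi => ?_
  obtain ⟨v, hv, rfl⟩ := List.mem_map.1 hi
  exact List.length_pos_iff.2 (hne v hv)

theorem FreeMonoid.finite_nontrivialFactorizations {X : Type*} (w : FreeMonoid X) :
    (nontrivialFactorizations w).Finite := by
  refine (w.toList.finite_setOf_flatten_eq.preimage
    (List.map_injective_iff.2 FreeMonoid.toList.injective).injOn).subset ?_
  rintro L ⟨hne, rfl⟩
  refine ⟨fun v hv => ?_, (FreeMonoid.toList_prod L).symm⟩
  obtain ⟨x, hx, rfl⟩ := List.mem_map.1 hv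
  exact fun h => hne x hx (FreeMonoid.toList.injective h)

theorem finite_nontrivialFactorizations_of_surjective {M N : Type*} [Monoid M] [Monoid N]
    {φ : N →* M} (hφ : Function.Surjective φ) (hfib : ∀ u, (φ ⁻¹' {u}).Finite)
    (hN : ∀ w : N, (nontrivialFactorizations w).Finite) (u : M) :
    (nontrivialFactorizations u).Finite := by
  set g := Function.surjInv hφ
  have hg : ∀ x, φ (g x) = x := Function.surjInv_eq hφ
  have hmaps : Set.MapsTo (List.map g) (nontrivialFactorizations u)
      (⋃ w ∈ φ ⁻¹' {u}, nontrivialFactorizations w) := by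
    rintro l ⟨hne, rfl⟩
    refine Set.mem_biUnion (x := (l.map g).prod) ?_ ⟨fun y hy => ?_, rfl⟩
    · simp [map_list_prod, Function.comp_def, hg]
    · obtain ⟨x, hx, rfl⟩ := List.mem_map.1 hy
      exact fun h => hne x hx (by rw [← hg x, h, map_one])
  exact Set.Finite.of_finite_image (((hfib u).biUnion fun w _ => hN w).subset
    hmaps.image_subset) (List.map_injective_iff.2 (Function.injective_surjInv hφ)).injOn

theorem Submonoid.closure_sdiff_one {M : Type*} [Monoid M] (s : Set M) :
    Submonoid.closure (s \ {1}) = Submonoid.closure s := by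
  rw [← Submonoid.closure_insert_one, Set.insert_sdiff_singleton, Submonoid.closure_insert_one]

theorem Monoid.exists_ne_one_lift_surjective (M : Type*) [Monoid M] [Monoid.FG M] :
    ∃ (X : Type) (_ : Finite X) (f : X → M),
      (∀ x, f x ≠ 1) ∧ Function.Surjective (FreeMonoid.lift f) := by
  obtain ⟨S, hS⟩ := Monoid.FG.fg_top (M := M)
  obtain ⟨n, ⟨e⟩⟩ := Finite.exists_equiv_fin ((S : Set M) \ {1} : Set M)
  refine ⟨Fin n, inferInstance, fun i => e.symm i, fun i => (e.symm i).2.2, ?_⟩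
  rw [← MonoidHom.mrange_eq_top, FreeMonoid.mrange_lift]
  change Submonoid.closure (Set.range (Subtype.val ∘ e.symm)) = ⊤
  rw [e.symm.surjective.range_comp, Subtype.range_coe, Submonoid.closure_sdiff_one, hS]

theorem FreeMonoid.finite_preimage_lift {M X : Type*} [Monoid M] [Finite X] {f : X → M}
    (hf : ∀ x, f x ≠ 1) {u : M} (hu : (nontrivialFactorizations u).Finite) :
    (FreeMonoid.lift f ⁻¹' {u}).Finite := by
  have hmaps : Set.MapsTo (fun w => w.toList.map f) (FreeMonoid.lift f ⁻¹' {u})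
      (nontrivialFactorizations u) := by
    intro w hw
    refine ⟨fun y hy => ?_, by rw [← FreeMonoid.lift_apply]; exact hw⟩
    obtain ⟨x, -, rfl⟩ := List.mem_map.1 hy
    exact hf x
  refine (hu.preimage' fun l _ => ?_).subset hmaps
  refine ((List.finite_length_eq X l.length).preimage FreeMonoid.toList.injective.injOn).subset ?_
  rintro w rfl
  simp

theorem graded_iff_finitely_many_nontrivial_factorizations
    (M : Type*) [Monoid M] [Monoid.FG M] :
    IsGraded M ↔
      ∀ u : M, {l : List M | (∀ x ∈ l, x ≠ 1) ∧ l.prod = u}.Finite := by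
  constructor
  · rintro ⟨X, -, φ, hφ, hfib⟩
    exact finite_nontrivialFactorizations_of_surjective hφ hfib
      FreeMonoid.finite_nontrivialFactorizations
  · intro h
    obtain ⟨X, hX, f, hf, hsurj⟩ := Monoid.exists_ne_one_lift_surjective M
    exact ⟨X, hX, FreeMonoid.lift f, hsurj, fun u => FreeMonoid.finite_preimage_lift hf (h u)⟩
end

section
/- Let M be a finitely generated monoid. Then M is graded if and only if M is finite J-above and the identity 1 is the unique regular element of M. -/
/-- `v` is a factor of `u` if `u ∈ MvM`. A monoid is finite J-above if
every element has only finitely many factors. -/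
def FiniteJAbove (M : Type*) [Monoid M] : Prop :=
  ∀ u : M, {v : M | ∃ p q : M, u = p * v * q}.Finite


/-!
If `α : X* → M` has finite fibres, every factor of `u` is the image of a factor of one of the
finitely many words in `α⁻¹(u)`, and a regular `u = uvu` has the preimages `U (VU)ⁿ`, which are
pairwise distinct unless `U` is empty.

Conversely, use generators different from `1`. As `ab = 1` makes `a` regular, no nonempty word
maps to `1`; and `ps = p` forces `s = 1`, since the powers of `s` are factors of `p`, so some
positive power of `s` is regular. Hence the prefixes of a word `w` have pairwise distinct images,
all factors of `α w`, which bounds the length of `w`.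
-/

open FreeMonoid

section Factors

variable {M : Type*} [Monoid M]

def factors (u : M) : Set M := {v | ∃ p q : M, u = p * v * q}

lemma mul_pow_eq_self {x y : M} (h : x * y = x) (n : ℕ) : x * y ^ n = x := by
  induction n with
  | zero => rw [pow_zero, mul_one]
  | succ n ih => rw [pow_succ, ← mul_assoc, ih, h]

lemma eq_one_of_mul_eq_one_left (hreg : ∀ u : M, (∃ v : M, u * v * u = u) → u = 1)
    {a b : M} (h : a * b = 1) : a = 1 :=
  hreg a ⟨b, by rw [h, one_mul]⟩

lemma eq_one_of_pow_eq_one (hreg : ∀ u : M, (∃ v : M, u * v * u = u) → u = 1)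
    {s : M} {n : ℕ} (hn : n ≠ 0) (h : s ^ n = 1) : s = 1 := by
  obtain ⟨k, rfl⟩ := Nat.exists_eq_succ_of_ne_zero hn
  exact eq_one_of_mul_eq_one_left hreg (b := s ^ k) (by rwa [← pow_succ'])

lemma eq_one_of_pow_eq_pow (hreg : ∀ u : M, (∃ v : M, u * v * u = u) → u = 1)
    {s : M} {a b : ℕ} (hab : a ≠ b) (h : s ^ a = s ^ b) : s = 1 := by
  wlog hlt : a < b generalizing a b
  · exact this hab.symm h.symm (hab.lt_or_gt.resolve_left hlt)
  obtain ⟨d, rfl⟩ := Nat.exists_eq_add_of_lt hlt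
  have hper : s ^ a * (s ^ (d + 1)) ^ a = s ^ a :=
    mul_pow_eq_self (by rw [← pow_add, ← add_assoc, ← h]) a
  rcases Nat.eq_zero_or_pos a with rfl | ha
  · exact eq_one_of_pow_eq_one hreg d.succ_ne_zero (by simpa using h.symm)
  refine eq_one_of_pow_eq_one hreg ha.ne' (hreg _ ⟨s ^ (a * d), ?_⟩)
  calc s ^ a * s ^ (a * d) * s ^ a = s ^ a * (s ^ (d + 1)) ^ a := by
        rw [← pow_mul, ← pow_add, ← pow_add, ← pow_add]; ring_nf
    _ = s ^ a := hper

lemma eq_one_of_mul_eq_self (hJ : FiniteJAbove M)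
    (hreg : ∀ u : M, (∃ v : M, u * v * u = u) → u = 1) {p s : M} (h : p * s = p) : s = 1 := by
  have hmem : ∀ n : ℕ, s ^ n ∈ factors p := fun n => ⟨p, 1, by rw [mul_one, mul_pow_eq_self h]⟩
  obtain ⟨a, b, heq, hab⟩ := Function.not_injective_iff.mp
    fun hinj => Set.infinite_of_injective_forall_mem hinj hmem (hJ p)
  exact eq_one_of_pow_eq_pow hreg hab heq

end Factors

namespace FreeMonoid

variable {X : Type*}

lemma length_pow (w : FreeMonoid X) (n : ℕ) : (w ^ n).length = n * w.length := by
  induction n with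
  | zero => rw [pow_zero, length_one, zero_mul]
  | succ n ih => rw [pow_succ, length_mul, ih, Nat.succ_mul]

lemma mul_pow_injective (w : FreeMonoid X) {z : FreeMonoid X} (hz : z ≠ 1) :
    Function.Injective fun n : ℕ => w * z ^ n := by
  intro m n h
  have hlen := congrArg length h
  simp only [length_mul, length_pow, Nat.add_left_cancel_iff] at hlen
  exact Nat.eq_of_mul_eq_mul_right (Nat.pos_of_ne_zero (mt length_eq_zero.mp hz)) hlen

end FreeMonoid

section OfGraded

variable {M : Type*} [Monoid M] {X : Type*} {α : FreeMonoid X →* M}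

lemma finite_factors_of_finite_preimage (hsurj : Function.Surjective α) {u : M}
    (hfib : (α ⁻¹' {u}).Finite) : (factors u).Finite := by
  have hsub : factors u ⊆ ⋃ w ∈ α ⁻¹' {u}, (fun l => α (ofList l)) '' {l | l.Sublist w.toList} := by
    rintro v ⟨p, q, rfl⟩
    obtain ⟨P, rfl⟩ := hsurj p
    obtain ⟨V, rfl⟩ := hsurj v
    obtain ⟨Q, rfl⟩ := hsurj q
    exact Set.mem_biUnion (x := P * V * Q) (by simp)
      ⟨V.toList, (List.infix_append _ _ _).sublist, rfl⟩
  refine (hfib.biUnion fun w _ => Set.Finite.image _ ?_).subset hsub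
  simpa only [← List.mem_sublists] using w.toList.sublists.finite_toSet

lemma eq_one_of_regular_of_finite_preimage (hsurj : Function.Surjective α) {u v : M}
    (hfib : (α ⁻¹' {u}).Finite) (h : u * v * u = u) : u = 1 := by
  obtain ⟨U, rfl⟩ := hsurj u
  obtain ⟨V, rfl⟩ := hsurj v
  have hmem : ∀ n : ℕ, U * (V * U) ^ n ∈ α ⁻¹' {α U} := fun n => by
    simp only [Set.mem_preimage, Set.mem_singleton_iff, map_mul, map_pow]
    exact mul_pow_eq_self (by rw [← mul_assoc, h]) n
  by_cases hVU : V * U = 1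
  · rw [(LeftCancelMonoid.mul_eq_one.mp hVU).2, map_one]
  · exact absurd hfib (Set.infinite_of_injective_forall_mem (U.mul_pow_injective hVU) hmem)

end OfGraded

section FiniteFibers

variable {M : Type*} [Monoid M] {X : Type*} {α : FreeMonoid X →* M}

lemma eq_one_of_map_eq_one (hreg : ∀ u : M, (∃ v : M, u * v * u = u) → u = 1)
    (hgen : ∀ x, α (of x) ≠ 1) {w : FreeMonoid X} (h : α w = 1) : w = 1 := by
  induction w using FreeMonoid.casesOn with
  | one => rfl
  | of_mul x w => exact absurd (eq_one_of_mul_eq_one_left hreg (by rwa [← map_mul])) (hgen x)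

lemma eq_of_prefix_of_map_eq (hα : ∀ w, α w = 1 → w = 1)
    (hcancel : ∀ p s : M, p * s = p → s = 1) {l₁ l₂ : List X} (hpre : l₁ <+: l₂)
    (h : α (ofList l₁) = α (ofList l₂)) : l₁ = l₂ := by
  obtain ⟨t, rfl⟩ := hpre
  rw [ofList_append, map_mul] at h
  have ht : t = [] := ofList.injective (hα _ (hcancel _ _ h.symm))
  rw [ht, List.append_nil]

lemma injOn_prefixes (hα : ∀ w, α w = 1 → w = 1) (hcancel : ∀ p s : M, p * s = p → s = 1)
    (L : List X) : Set.InjOn (fun l => α (ofList l)) {l | l <+: L} := by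
  intro l₁ h₁ l₂ h₂ h
  rcases List.prefix_or_prefix_of_prefix h₁ h₂ with h12 | h21
  · exact eq_of_prefix_of_map_eq hα hcancel h12 h
  · exact (eq_of_prefix_of_map_eq hα hcancel h21 h.symm).symm

lemma length_lt_ncard_factors (hJ : FiniteJAbove M) (hα : ∀ w, α w = 1 → w = 1)
    (hcancel : ∀ p s : M, p * s = p → s = 1) (w : FreeMonoid X) :
    w.length < (factors (α w)).ncard := by
  set L := w.toList
  have hmaps : ∀ i ∈ (Finset.range (L.length + 1) : Set ℕ),
      α (ofList (L.take i)) ∈ factors (α w) := fun i _ =>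
    ⟨1, α (ofList (L.drop i)), by
      rw [one_mul, ← map_mul, ← ofList_append, List.take_append_drop, ofList_toList]⟩
  have hinj : Set.InjOn (fun i => α (ofList (L.take i))) (Finset.range (L.length + 1)) := by
    intro i hi j hj h
    have := congrArg List.length
      (injOn_prefixes hα hcancel L (List.take_prefix i L) (List.take_prefix j L) h)
    simp only [Finset.coe_range, Set.mem_Iio] at hi hj
    rwa [List.length_take, List.length_take, min_eq_left (by omega), min_eq_left (by omega)] at this
  have := Set.ncard_le_ncard_of_injOn _ hmaps hinj (hJ _)
  rwa [Set.ncard_coe_finset, Finset.card_range] at this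

lemma finite_preimage_of_finiteJAbove [Finite X] (hJ : FiniteJAbove M)
    (hreg : ∀ u : M, (∃ v : M, u * v * u = u) → u = 1) (hgen : ∀ x, α (of x) ≠ 1) (m : M) :
    (α ⁻¹' {m}).Finite := by
  refine ((List.finite_length_le X (factors m).ncard).preimage toList.injective.injOn).subset ?_
  rintro w rfl
  exact (length_lt_ncard_factors hJ (fun _ => eq_one_of_map_eq_one hreg hgen)
    (fun _ _ => eq_one_of_mul_eq_self hJ hreg) w).le

end FiniteFibers

lemma Monoid.FG.exists_surjective_freeMonoid_hom_ne_one (M : Type*) [Monoid M] [Monoid.FG M] :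
    ∃ (X : Type) (_ : Finite X) (α : FreeMonoid X →* M),
      Function.Surjective α ∧ ∀ x, α (of x) ≠ 1 := by
  obtain ⟨X, _, φ, hφ⟩ := Monoid.fg_iff_exists_freeGroup_hom_surjective_finite.mp ‹_›
  refine ⟨{x // φ (of x) ≠ 1}, inferInstance, lift fun x => φ (of x.1), ?_, fun x => x.2⟩
  have hclosure : Submonoid.closure (Set.range (φ ∘ of)) = ⊤ := by
    rw [← mrange_lift, lift_restrict, MonoidHom.mrange_eq_top.mpr hφ]
  rw [← MonoidHom.mrange_eq_top, mrange_lift, eq_top_iff, ← hclosure, Submonoid.closure_le]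
  rintro _ ⟨x, rfl⟩
  by_cases hx : φ (of x) = 1
  · rw [Function.comp_apply, hx]
    exact Submonoid.one_mem _
  · exact Submonoid.subset_closure ⟨⟨x, hx⟩, rfl⟩

theorem graded_iff_finiteJAbove_and_unique_regular
    (M : Type*) [Monoid M] [Monoid.FG M] :
    IsGraded M ↔
      (FiniteJAbove M ∧ ∀ u : M, (∃ v : M, u * v * u = u) → u = 1) := by
  constructor
  · rintro ⟨X, _, α, hsurj, hfib⟩
    exact ⟨fun u => finite_factors_of_finite_preimage hsurj (hfib u),
      fun u ⟨v, h⟩ => eq_one_of_regular_of_finite_preimage hsurj (hfib u) h⟩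
  · rintro ⟨hJ, hreg⟩
    obtain ⟨X, _, α, hsurj, hgen⟩ := Monoid.FG.exists_surjective_freeMonoid_hom_ne_one M
    exact ⟨X, inferInstance, α, hsurj, finite_preimage_of_finiteJAbove hJ hreg hgen⟩
end

section
/- Let X be a finite alphabet, let G be a virtually free group, and let α : X* → G be a monoid homomorphism from the free monoid on X to G. Then for every g ∈ G the language α⁻¹(g) = {w ∈ X* : α(w) = g} is a context-free language over X. -/
universe u

def VirtuallyFree (G : Type u) [Group G] : Prop :=
  ∃ H : Subgroup G, H.FiniteIndex ∧ ∃ ι : Type u, Nonempty (H ≃* FreeGroup ι)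

/-!
Let `H ≅ F(ι)` be a free subgroup of finite index in `G`, with right coset representatives
`rep q`. Reading a word letter by letter from `rep q` writes `rep q * α w = f * rep q'` with
`f ∈ H`, and all the free-group letters that can occur lie in a finite subset of `ι`.
The grammar has nonterminals `(q, f, q')` with `|f| ≤ K`, the rules `(q, 1, q) → ε`,
`(q, f_x, q_x) → x` for single letters, and `(q, f₁ f₂, q'') → (q, f₁, p) (p, f₂, q'')`.
Completeness is a tree argument: the successive free-group coordinates of the prefixes of `w`
form a path in the Cayley tree with bounded steps, which must pass near the midpoint of the
geodesic from `1` to `f`; cutting `w` there splits `(q, f, q')` into two nonterminals of the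
same kind.
-/

theorem List.exists_longest_common_prefix {β : Type*} :
    ∀ l₁ l₂ : List β, ∃ r u v, l₁ = r ++ u ∧ l₂ = r ++ v ∧
      ∀ a ∈ u.head?, ∀ b ∈ v.head?, a ≠ b
  | a :: l₁, b :: l₂ => by
    by_cases hab : a = b
    · obtain ⟨r, u, v, rfl, rfl, huv⟩ := exists_longest_common_prefix l₁ l₂
      exact ⟨a :: r, u, v, rfl, by rw [hab]; rfl, huv⟩
    · exact ⟨[], a :: l₁, b :: l₂, rfl, rfl, by simpa using hab⟩
  | [], l₂ => ⟨[], [], l₂, rfl, rfl, by simp⟩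
  | l₁, [] => ⟨[], l₁, [], rfl, rfl, by simp⟩

namespace FreeGroup

variable {α : Type*}

theorem IsReduced.invRev {L : List (α × Bool)} (h : IsReduced L) : IsReduced (invRev L) := by
  rw [IsReduced, FreeGroup.invRev, List.isChain_reverse, List.isChain_map]
  exact h.imp fun a b hab heq => by simpa [eq_comm] using hab heq.symm

theorem IsReduced.invRev_append {u v : List (α × Bool)} (hu : IsReduced u) (hv : IsReduced v)
    (huv : ∀ a ∈ u.head?, ∀ b ∈ v.head?, a ≠ b) :
    IsReduced (FreeGroup.invRev u ++ v) := by
  refine List.isChain_append.mpr ⟨hu.invRev, hv, ?_⟩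
  intro x hx y hy hxy
  cases u with
  | nil => simp [FreeGroup.invRev] at hx
  | cons a u =>
    simp only [FreeGroup.invRev, List.getLast?_reverse, List.head?_map, List.head?_cons,
      Option.map_some, Option.mem_def, Option.some_inj] at hx
    subst hx
    have := huv a rfl y hy
    grind

theorem mk_mem_range_map {β : Type*} {e : β → α} {L : List (α × Bool)}
    (h : ∀ a ∈ L, a.1 ∈ Set.range e) : mk L ∈ (map e).range := by
  induction L with
  | nil => exact one_mem _
  | cons a L ih =>
    obtain ⟨b, hb⟩ := h a List.mem_cons_self
    rw [← List.singleton_append, ← mul_mk]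
    exact mul_mem ⟨mk [(b, a.2)], by simp [map.mk, hb]⟩
      (ih fun a' ha' => h a' (List.mem_cons_of_mem a ha'))

variable [DecidableEq α]

theorem IsReduced.norm_mk {L : List (α × Bool)} (h : IsReduced L) : norm (mk L) = L.length := by
  rw [norm, toWord_mk, h.reduce_eq]

theorem norm_inv_mul_mk_append {r u v : List (α × Bool)} (hu : IsReduced u) (hv : IsReduced v)
    (huv : ∀ a ∈ u.head?, ∀ b ∈ v.head?, a ≠ b) :
    norm ((mk (r ++ u))⁻¹ * mk (r ++ v)) = u.length + v.length := by
  rw [← mul_mk, ← mul_mk, mul_inv_rev, mul_assoc, inv_mul_cancel_left, inv_mk, mul_mk,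
    (hu.invRev_append hv huv).norm_mk, List.length_append, invRev_length]

/-- In the Cayley tree, a geodesic from outside the branch at `p ++ [c]` into it passes
through `p`. -/
theorem norm_inv_mul_mk_le_of_prefix {x y : FreeGroup α} {p : List (α × Bool)} {c : α × Bool}
    (hy : p ++ [c] <+: y.toWord) (hx : ¬ p ++ [c] <+: x.toWord) :
    norm (x⁻¹ * mk p) ≤ norm (x⁻¹ * y) := by
  obtain ⟨r, u, v, hxw, hyw, huv⟩ := List.exists_longest_common_prefix x.toWord y.toWord
  have hry : r <+: y.toWord := hyw ▸ List.prefix_append r v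
  have hrp : r.length ≤ p.length := by
    by_contra! hlt
    exact hx ((List.prefix_of_prefix_length_le hy hry (by simpa using hlt)).trans
      (hxw ▸ List.prefix_append r u))
  obtain ⟨p', rfl⟩ :=
    List.prefix_of_prefix_length_le hry ((List.prefix_append p _).trans hy) hrp
  have hpv : p' <+: v := (List.prefix_append_right_inj r).mp
    (hyw ▸ (List.prefix_append _ _).trans hy)
  have hred : IsReduced (r ++ u) ∧ IsReduced (r ++ v) :=
    ⟨hxw ▸ isReduced_toWord, hyw ▸ isReduced_toWord⟩
  have hu : IsReduced u := hred.1.infix (List.suffix_append r u).isInfix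
  have hv : IsReduced v := hred.2.infix (List.suffix_append r v).isInfix
  have hup : ∀ a ∈ u.head?, ∀ b ∈ p'.head?, a ≠ b := fun a ha b hb =>
    huv a ha b (by obtain ⟨t, rfl⟩ := hpv; cases p' <;> simp_all)
  conv_lhs => rw [← mk_toWord (x := x), hxw]
  conv_rhs => rw [← mk_toWord (x := x), ← mk_toWord (x := y), hxw, hyw]
  rw [norm_inv_mul_mk_append hu (hv.infix hpv.isInfix) hup, norm_inv_mul_mk_append hu hv huv]
  exact Nat.add_le_add_left hpv.length_le _

theorem exists_norm_inv_mul_mk_le_of_path {F : ℕ → FreeGroup α} {n L : ℕ} (h0 : F 0 = 1)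
    (hstep : ∀ s < n, norm ((F s)⁻¹ * F (s + 1)) ≤ L)
    {p : List (α × Bool)} {c : α × Bool} (hp : p ++ [c] <+: (F n).toWord) :
    ∃ j < n, norm ((F j)⁻¹ * mk p) ≤ L := by
  classical
  have hex : ∃ j, p ++ [c] <+: (F j).toWord := ⟨n, hp⟩
  obtain ⟨j, hj⟩ : ∃ j, Nat.find hex = j + 1 := by
    refine Nat.exists_eq_add_one.mpr (Nat.pos_of_ne_zero fun h0' => ?_)
    have := Nat.find_spec hex
    rw [h0', h0, toWord_one, List.prefix_nil] at this
    simp at this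
  have hjn : j < n := by have := Nat.find_min' hex hp; omega
  refine ⟨j, hjn, le_trans ?_ (hstep j hjn)⟩
  exact norm_inv_mul_mk_le_of_prefix (hj ▸ Nat.find_spec hex) (Nat.find_min hex (by omega))

/-- The path passes within `L` of the midpoint of the geodesic from `1` to `F n`. -/
theorem exists_split_of_path {F : ℕ → FreeGroup α} {n L K : ℕ} (hK : 3 * L + 1 ≤ K)
    (hn : 2 ≤ n) (h0 : F 0 = 1) (hstep : ∀ s < n, norm ((F s)⁻¹ * F (s + 1)) ≤ L)
    (hFn : norm (F n) ≤ K) :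
    ∃ j, 0 < j ∧ j < n ∧ norm (F j) ≤ K ∧ norm ((F j)⁻¹ * F n) ≤ K := by
  set a := (F n).toWord
  have hna : norm (F n) = a.length := rfl
  by_cases hsmall : a.length ≤ 2 * L + 1
  · have h1 : norm (F 1) ≤ L := by simpa [h0] using hstep 0 (by omega)
    refine ⟨1, one_pos, hn, by omega, ?_⟩
    have := norm_mul_le (F 1)⁻¹ (F n)
    rw [norm_inv_eq] at this
    omega
  set t := a.length / 2
  have ht : t < a.length := by omega
  have hmid : IsReduced (a.take t) ∧ IsReduced (a.drop t) :=
    ⟨isReduced_toWord.infix (List.take_prefix t a).isInfix,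
      isReduced_toWord.infix (List.drop_suffix t a).isInfix⟩
  have hm : norm (mk (a.take t)) = t := by
    rw [hmid.1.norm_mk, List.length_take]; omega
  have hmn : norm ((mk (a.take t))⁻¹ * F n) = a.length - t := by
    rw [← mk_toWord (x := F n), ← List.take_append_drop t (F n).toWord, ← mul_mk,
      inv_mul_cancel_left, hmid.2.norm_mk, List.length_drop]
  obtain ⟨j, hjn, hj⟩ := exists_norm_inv_mul_mk_le_of_path h0 hstep
    ((List.take_append_getElem ht).symm ▸ List.take_prefix (t + 1) a)
  have hFj : norm (F j) ≤ t + L := by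
    have := norm_mul_le (mk (a.take t)) ((F j)⁻¹ * mk (a.take t))⁻¹
    rw [norm_inv_eq, mul_inv_rev, inv_inv, mul_inv_cancel_left] at this
    omega
  have hFjn : norm ((F j)⁻¹ * F n) ≤ L + (a.length - t) := by
    have := norm_mul_le ((F j)⁻¹ * mk (a.take t)) ((mk (a.take t))⁻¹ * F n)
    rw [mul_assoc, mul_inv_cancel_left] at this
    omega
  have hj0 : j ≠ 0 := by
    rintro rfl
    rw [h0, inv_one, one_mul] at hj
    omega
  exact ⟨j, Nat.pos_of_ne_zero hj0, hjn, by omega, by omega⟩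

theorem finite_setOf_norm_le [Finite α] (K : ℕ) :
    {x : FreeGroup α | norm x ≤ K}.Finite :=
  (List.finite_length_le _ K).preimage toWord_injective.injOn

theorem exists_injective_forall_mem_range_map {κ : Type*} [Finite κ] (y : κ → FreeGroup α) :
    ∃ (n : ℕ) (e : Fin n → α), Function.Injective e ∧ ∀ k, y k ∈ (map e).range := by
  have hA : (⋃ k, {a | ∃ s ∈ (y k).toWord, s.1 = a}).Finite :=
    Set.finite_iUnion fun k => ((y k).toWord.finite_toSet.image Prod.fst).subset
      (by rintro a ⟨s, hs, rfl⟩; exact ⟨s, hs, rfl⟩)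
  obtain ⟨n, e, he⟩ := hA.fin_embedding
  refine ⟨n, e, e.injective, fun k => ?_⟩
  rw [← mk_toWord (x := y k)]
  exact mk_mem_range_map fun s hs => he ▸ Set.mem_iUnion.mpr ⟨k, s, hs, rfl⟩

end FreeGroup

/-- The Schreier graph of the right cosets `ψ(F(S)) * rep q`, with edges labelled in `F(S)`. -/
structure FreeCosetSystem {X : Type} {G : Type*} [Group G] (α : FreeMonoid X →* G)
    (S Q : Type) where
  ψ : FreeGroup S →* G
  rep : Q → G
  next : Q → X → Q
  label : Q → X → FreeGroup S
  rep_mul_of : ∀ q x, rep q * α (FreeMonoid.of x) = ψ (label q x) * rep (next q x)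
  eq_of_mul_rep_eq : ∀ {f f' q q'}, ψ f * rep q = ψ f' * rep q' → f = f' ∧ q = q'

namespace FreeCosetSystem

variable {X : Type} {G : Type*} [Group G] {α : FreeMonoid X →* G} {S Q : Type}
  (C : FreeCosetSystem α S Q)

def walk (q : Q) (w : List X) : Q × FreeGroup S :=
  w.foldl (fun pf x => (C.next pf.1 x, pf.2 * C.label pf.1 x)) (q, 1)

theorem walk_append_singleton (q : Q) (w : List X) (x : X) :
    C.walk q (w ++ [x]) =
      (C.next (C.walk q w).1 x, (C.walk q w).2 * C.label (C.walk q w).1 x) := by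
  simp [walk]

theorem rep_mul_eq_walk (q : Q) (w : List X) :
    C.rep q * α (FreeMonoid.ofList w) = C.ψ (C.walk q w).2 * C.rep (C.walk q w).1 := by
  induction w using List.reverseRecOn with
  | nil => simp [walk]
  | append_singleton w x ih =>
    rw [walk_append_singleton, FreeMonoid.ofList_append, map_mul, ← mul_assoc, ih, mul_assoc,
      FreeMonoid.ofList_singleton, C.rep_mul_of, map_mul, mul_assoc]

/-- `(q, f, q')` is meant to derive the words `w` with `rep q * α w = ψ f * rep q'`. -/
abbrev Nonterminal (S Q : Type) : Type := Q × FreeGroup S × Q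

def epsRule (q : Q) : ContextFreeRule X (Nonterminal S Q) := ⟨(q, 1, q), []⟩

def letterRule (q : Q) (x : X) : ContextFreeRule X (Nonterminal S Q) :=
  ⟨(q, C.label q x, C.next q x), [.terminal x]⟩

def splitRule (q p q' : Q) (f₁ f₂ : FreeGroup S) : ContextFreeRule X (Nonterminal S Q) :=
  ⟨(q, f₁ * f₂, q'), [.nonterminal (q, f₁, p), .nonterminal (p, f₂, q')]⟩

def value : Symbol X (Nonterminal S Q) → G
  | .terminal x => α (FreeMonoid.of x)
  | .nonterminal (q, f, q') => (C.rep q)⁻¹ * C.ψ f * C.rep q'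

theorem prod_value_terminal (w : List X) :
    ((w.map Symbol.terminal).map C.value).prod = α (FreeMonoid.ofList w) := by
  induction w with
  | nil => simp
  | cons x w ih => rw [List.map_cons, List.map_cons, List.prod_cons, ih, value,
      FreeMonoid.ofList_cons, map_mul]

variable [DecidableEq S]

theorem exists_split_of_rep_mul_eq {K L : ℕ}
    (hL : ∀ q x, (C.label q x).norm ≤ L) (hK : 3 * L + 1 ≤ K)
    {w : List X} (hw : 2 ≤ w.length) {q q' : Q} {f : FreeGroup S} (hf : f.norm ≤ K)
    (h : C.rep q * α (FreeMonoid.ofList w) = C.ψ f * C.rep q') :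
    ∃ j, 0 < j ∧ j < w.length ∧ ∃ p f₁, f₁.norm ≤ K ∧ (f₁⁻¹ * f).norm ≤ K ∧
      C.rep q * α (FreeMonoid.ofList (w.take j)) = C.ψ f₁ * C.rep p ∧
      C.rep p * α (FreeMonoid.ofList (w.drop j)) = C.ψ (f₁⁻¹ * f) * C.rep q' := by
  set F : ℕ → FreeGroup S := fun s => (C.walk q (w.take s)).2
  have hFw : F w.length = f := by
    rw [C.rep_mul_eq_walk] at h
    simpa [F] using (C.eq_of_mul_rep_eq h).1
  have hstep : ∀ s < w.length, ((F s)⁻¹ * F (s + 1)).norm ≤ L := fun s hs => by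
    simp only [F]
    rw [← List.take_append_getElem hs, walk_append_singleton, inv_mul_cancel_left]
    exact hL _ _
  obtain ⟨j, hj0, hjw, hFj, hFjw⟩ :=
    FreeGroup.exists_split_of_path hK hw (by simp [F, walk]) hstep (hFw ▸ hf)
  refine ⟨j, hj0, hjw, (C.walk q (w.take j)).1, F j, hFj, hFw ▸ hFjw,
    C.rep_mul_eq_walk q _, ?_⟩
  rw [← List.take_append_drop j w, FreeMonoid.ofList_append, map_mul, ← mul_assoc,
    C.rep_mul_eq_walk, mul_assoc] at h
  rw [map_mul, map_inv, mul_assoc, ← h, inv_mul_cancel_left]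

def rules (K : ℕ) : Set (ContextFreeRule X (Nonterminal S Q)) :=
  Set.range epsRule ∪ Set.range (Function.uncurry C.letterRule) ∪
    ⋃ (q : Q) (p : Q) (q' : Q),
      Set.image2 (splitRule q p q') {f | f.norm ≤ K} {f | f.norm ≤ K}

theorem value_output_eq {K : ℕ} {r : ContextFreeRule X (Nonterminal S Q)} (hr : r ∈ C.rules K) :
    (r.output.map C.value).prod = C.value (.nonterminal r.input) := by
  rcases hr with (⟨q, rfl⟩ | ⟨⟨q, x⟩, rfl⟩) | hr
  · simp [epsRule, value]
  · simp [letterRule, value, mul_assoc, ← C.rep_mul_of]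
  · obtain ⟨q, p, q', f₁, -, f₂, -, rfl⟩ := by simpa only [Set.mem_iUnion] using hr
    simp [splitRule, value, mul_assoc]

theorem epsRule_mem (K : ℕ) (q : Q) : epsRule q ∈ C.rules K := Or.inl (Or.inl ⟨q, rfl⟩)

theorem letterRule_mem (K : ℕ) (q : Q) (x : X) : C.letterRule q x ∈ C.rules K :=
  Or.inl (Or.inr ⟨(q, x), rfl⟩)

theorem splitRule_mem {K : ℕ} (q p q' : Q) {f₁ f₂ : FreeGroup S} (h₁ : f₁.norm ≤ K)
    (h₂ : f₂.norm ≤ K) : splitRule q p q' f₁ f₂ ∈ C.rules K :=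
  Or.inr <| Set.mem_iUnion₂.mpr
    ⟨q, p, Set.mem_iUnion.mpr ⟨q', Set.mem_image2_of_mem h₁ h₂⟩⟩

variable [Finite S] [Finite Q] [Finite X]

theorem rules_finite (K : ℕ) : (C.rules K).Finite :=
  ((Set.finite_range _).union (Set.finite_range _)).union <|
    Set.finite_iUnion fun _ => Set.finite_iUnion fun _ => Set.finite_iUnion fun _ =>
      (FreeGroup.finite_setOf_norm_le K).image2 _ (FreeGroup.finite_setOf_norm_le K)

-- Reducible, so that the nonterminals of `C.grammar K start` are seen to be `Nonterminal S Q`.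
noncomputable abbrev grammar (K : ℕ) (start : Nonterminal S Q) : ContextFreeGrammar X :=
  ⟨Nonterminal S Q, start, (C.rules_finite K).toFinset⟩

theorem prod_value_eq_of_derives {K : ℕ} {start : Nonterminal S Q}
    {u v : List (Symbol X (Nonterminal S Q))} (h : (C.grammar K start).Derives u v) :
    (u.map C.value).prod = (v.map C.value).prod := by
  induction h with
  | refl => rfl
  | tail _ hstep ih =>
    obtain ⟨r, hr, hrw⟩ := hstep
    obtain ⟨p, p', rfl, rfl⟩ := hrw.exists_parts
    rw [ih]
    simp only [List.map_append, List.prod_append, List.map_singleton, List.prod_singleton,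
      C.value_output_eq ((C.rules_finite K).mem_toFinset.mp hr)]

theorem rep_mul_eq_of_mem_language {K : ℕ} {q q' : Q} {f : FreeGroup S} {w : List X}
    (hw : w ∈ (C.grammar K (q, f, q')).language) :
    C.rep q * α (FreeMonoid.ofList w) = C.ψ f * C.rep q' := by
  have := C.prod_value_eq_of_derives hw
  rw [List.map_singleton, List.prod_singleton, prod_value_terminal] at this
  rw [← this, value, mul_assoc, mul_inv_cancel_left]

theorem produces_of_mem_rules {K : ℕ} {start : Nonterminal S Q}
    {r : ContextFreeRule X (Nonterminal S Q)} (hr : r ∈ C.rules K) :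
    (C.grammar K start).Produces [.nonterminal r.input] r.output :=
  ⟨r, (C.rules_finite K).mem_toFinset.mpr hr, ContextFreeRule.Rewrites.input_output⟩

theorem derives_of_rep_mul_eq {K L : ℕ} (hL : ∀ q x, (C.label q x).norm ≤ L)
    (hK : 3 * L + 1 ≤ K) {start : Nonterminal S Q} (w : List X) {q q' : Q} {f : FreeGroup S}
    (hf : f.norm ≤ K) (h : C.rep q * α (FreeMonoid.ofList w) = C.ψ f * C.rep q') :
    (C.grammar K start).Derives [.nonterminal (q, f, q')] (w.map .terminal) := by
  induction hn : w.length using Nat.strong_induction_on generalizing w q q' f with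
  | _ n ih =>
  rcases w with _ | ⟨x, _ | ⟨y, w⟩⟩
  · obtain ⟨rfl, rfl⟩ := C.eq_of_mul_rep_eq (f := 1) (by simpa using h)
    exact (C.produces_of_mem_rules (C.epsRule_mem K q)).single
  · rw [FreeMonoid.ofList_singleton, C.rep_mul_of] at h
    obtain ⟨rfl, rfl⟩ := C.eq_of_mul_rep_eq h
    exact (C.produces_of_mem_rules (C.letterRule_mem K q x)).single
  generalize hv : x :: y :: w = v at h hn ⊢
  obtain ⟨j, hj0, hjv, p, f₁, hf₁, hf₂, hpre, hsuf⟩ :=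
    C.exists_split_of_rep_mul_eq hL hK (by simp [← hv]) hf h
  have hpre := ih _ (by simp; omega) (v.take j) hf₁ hpre rfl
  have hsuf := ih _ (by simp; omega) (v.drop j) hf₂ hsuf rfl
  rw [← mul_inv_cancel_left f₁ f, ← List.take_append_drop j v, List.map_append]
  exact (C.produces_of_mem_rules (C.splitRule_mem q p q' hf₁ hf₂)).trans_derives
    ((hpre.append_right _).trans (hsuf.append_left _))

theorem isContextFree_setOf_rep_mul_eq (q q' : Q) (f : FreeGroup S) :
    Language.IsContextFree
      {w : List X | C.rep q * α (FreeMonoid.ofList w) = C.ψ f * C.rep q'} := by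
  obtain ⟨L, hL⟩ := Finite.exists_le fun qx : Q × X => (C.label qx.1 qx.2).norm
  have hK : 3 * L + 1 ≤ 3 * L + 1 + f.norm := Nat.le_add_right _ _
  exact ⟨C.grammar (3 * L + 1 + f.norm) (q, f, q'), Set.ext fun w =>
    ⟨C.rep_mul_eq_of_mem_language,
      C.derives_of_rep_mul_eq (fun q x => hL (q, x)) hK w (Nat.le_add_left _ _)⟩⟩

end FreeCosetSystem

theorem Subgroup.exists_fin_rightTransversal {G : Type*} [Group G] (H : Subgroup G)
    [H.FiniteIndex] : ∃ (m : ℕ) (rep : Fin m → G), ∀ x, ∃! q, x * (rep q)⁻¹ ∈ H := by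
  have : Finite (Quotient (QuotientGroup.rightRel H)) :=
    .of_equiv _ (QuotientGroup.quotientRightRelEquivQuotientLeftRel H).symm
  obtain ⟨m, ⟨qe⟩⟩ := Finite.exists_equiv_fin (Quotient (QuotientGroup.rightRel H))
  refine ⟨m, fun q => (qe.symm q).out, fun x => ⟨qe ⟦x⟧, ?_, fun q hq => ?_⟩⟩
  · beta_reduce
    rw [← QuotientGroup.rightRel_apply, ← Quotient.eq, Quotient.out_eq, Equiv.symm_apply_apply]
  · beta_reduce at hq
    rw [← QuotientGroup.rightRel_apply, ← Quotient.eq, Quotient.out_eq] at hq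
    rw [← hq, Equiv.apply_symm_apply]

theorem exists_freeCosetSystem {X : Type} [Finite X] {G : Type*} [Group G] {ι : Type*}
    {H : Subgroup G} [H.FiniteIndex] (e : H ≃* FreeGroup ι) (α : FreeMonoid X →* G) (g : G) :
    ∃ (n m : ℕ) (C : FreeCosetSystem α (Fin n) (Fin m)) (q q' : Fin m) (f : FreeGroup (Fin n)),
      C.rep q * g = C.ψ f * C.rep q' := by
  classical
  obtain ⟨m, rep, hrep⟩ := H.exists_fin_rightTransversal
  choose idx hidx huniq using hrep
  let φ (x : G) : H := ⟨x * (rep (idx x))⁻¹, hidx x⟩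
  let q₀ := idx 1
  obtain ⟨n, emb, hemb, hmem⟩ := FreeGroup.exists_injective_forall_mem_range_map
    fun o : Option (Fin m × X) => e (φ (o.elim (rep q₀ * g) fun qx => rep qx.1 * α (.of qx.2)))
  let ψ : FreeGroup (Fin n) →* G := H.subtype.comp (e.symm.toMonoidHom.comp (FreeGroup.map emb))
  have hψ {f : FreeGroup (Fin n)} {x : G} (h : FreeGroup.map emb f = e (φ x)) :
      ψ f * rep (idx x) = x := by
    simp [ψ, h, φ]
  choose label hlabel using fun q x => hmem (some (q, x))
  obtain ⟨f, hf⟩ := hmem none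
  refine ⟨n, m, ⟨ψ, rep, fun q x => idx (rep q * α (.of x)), label,
    fun q x => (hψ (hlabel q x)).symm, fun {f₁ f₂ q q'} h => ?_⟩,
    q₀, idx (rep q₀ * g), f, (hψ hf).symm⟩
  have hq : q = q' := by
    have h₁ := huniq (ψ f₁ * rep q) q (by simp [ψ])
    have h₂ := huniq (ψ f₁ * rep q) q' (by rw [h]; simp [ψ])
    exact h₁.trans h₂.symm
  subst hq
  refine ⟨?_, rfl⟩
  have hinj : Function.Injective ψ :=
    H.subtype_injective.comp (e.symm.injective.comp (FreeGroup.map_injective hemb))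
  exact hinj (mul_right_cancel h)

theorem preimage_contextFree_of_virtuallyFree
    (X : Type) [Fintype X] (G : Type u) [Group G] (hG : VirtuallyFree G)
    (α : FreeMonoid X →* G) (g : G) :
    Language.IsContextFree {w : List X | α (FreeMonoid.ofList w) = g} := by
  obtain ⟨H, hH, ι, ⟨e⟩⟩ := hG
  obtain ⟨n, m, C, q, q', f, hg⟩ := exists_freeCosetSystem e α g
  simpa only [← hg, mul_right_inj] using C.isContextFree_setOf_rep_mul_eq q q' f
end

section
/- Let M be a monoid and let S, S′ ⊆ M \ {1} be two finite generating sets for M. Then the word problem WP_S(M) is a rational subset of the product monoid S* × S* if and only if WP_{S′}(M) is a rational subset of S′* × S′*. -/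
/-- A subset `R` of a monoid `N` is rational if it is the image of a regular
language under a monoid homomorphism from a finitely generated free monoid. -/
def IsRationalSubset {N : Type*} [Monoid N] (R : Set N) : Prop :=
  ∃ (A : Type) (_ : Finite A) (φ : FreeMonoid A →* N) (L : Language A),
    L.IsRegular ∧ (fun w => φ (FreeMonoid.ofList w)) '' L = R

/-- The word problem of a monoid `M` with respect to a finite generating set `S`:
the set of pairs of words over `S` representing the same element of `M`. -/
def WordProblem {M : Type*} [Monoid M] (S : Finset M) :
    Set (FreeMonoid S × FreeMonoid S) :=
  {p | FreeMonoid.lift (fun s : S => (s : M)) p.1 =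
       FreeMonoid.lift (fun s : S => (s : M)) p.2}

/-!
Choosing for every `t ∈ S'` a word over `S` representing it gives a homomorphism
`F : S'* → S*` with `WP_{S'}(M) = (F × F)⁻¹ WP_S(M)`, so it suffices that rational subsets of
`B* × N` are stable under preimages by `F × id` (and, symmetrically, `id × F`).
If `R` is the image of a regular language `L ⊆ A*` under `a ↦ (x a, n a)`, then `(u, m)` lies
in the preimage iff `m = n(v)` and `x(v) = F(u)` for some `v ∈ L`. Reading `v` and `u`
interleaved and matching the blocks `F(s)` greedily against `x(v)`, the unmatched part never
exceeds `max |F s| + max |x a|`. Hence the interleavings witnessing `x(v) = F(u)` are recognised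
by an automaton whose state is this bounded buffer, and `(u, m)` is read off such an
interleaving by a monoid homomorphism.
-/

theorem Language.IsRegular.preimage {α β : Type*} {L : Language β} (hL : L.IsRegular)
    (g : List α → List β) (hg : ∀ u v, g (u ++ v) = g u ++ g v) :
    Language.IsRegular (g ⁻¹' L) := by
  refine .of_finite_range_leftQuotient <|
    (hL.finite_range_leftQuotient.image (g ⁻¹' ·)).subset ?_
  rintro _ ⟨w, rfl⟩
  exact ⟨L.leftQuotient (g w), ⟨g w, rfl⟩, by
    ext v; change g w ++ g v ∈ L ↔ g (w ++ v) ∈ L; rw [hg]⟩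

theorem DFA.isRegular_accepts_of_finite_range_eval {α σ : Type*} (M : DFA α σ)
    (h : (Set.range M.eval).Finite) : M.accepts.IsRegular :=
  .of_finite_range_leftQuotient <| by
    rw [Language.leftQuotient_accepts, Set.range_comp]
    exact h.image _

theorem FreeMonoid.hom_ofList {β γ : Type*} (F : FreeMonoid β →* FreeMonoid γ) (u : List β) :
    F (ofList u) = ofList (u.flatMap fun s => (F (of s)).toList) := by
  induction u with
  | nil => simp
  | cons s u ih => rw [ofList_cons, map_mul, ih, List.flatMap_cons, ofList_append]; rfl

theorem List.exists_eq_flatMap_append_of_append_eq_flatMap {β γ : Type*} {f : β → List γ} {c : ℕ}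
    (hc : ∀ s, (f s).length ≤ c) (u : List β) {b rest : List γ}
    (h : b ++ rest = u.flatMap f) :
    ∃ u₁ u₂ b', u = u₁ ++ u₂ ∧ b = u₁.flatMap f ++ b' ∧ b' ++ rest = u₂.flatMap f ∧
      b'.length ≤ c := by
  induction u generalizing b with
  | nil =>
    obtain ⟨rfl, rfl⟩ := List.append_eq_nil_iff.mp h
    exact ⟨[], [], [], rfl, rfl, rfl, Nat.zero_le c⟩
  | cons s u ih =>
    rw [List.flatMap_cons] at h
    obtain ⟨t, hs, -⟩ | ⟨t, rfl, ht⟩ := List.append_eq_append_iff.mp h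
    · refine ⟨[], s :: u, b, rfl, rfl, h, ?_⟩
      exact le_trans (by simp [hs]) (hc s)
    · obtain ⟨u₁, u₂, b', rfl, rfl, hrest, hb'⟩ := ih ht.symm
      exact ⟨s :: u₁, u₂, b', rfl, by simp, hrest, hb'⟩

section Buffer

variable {A β γ : Type*} (x : A → List γ) (f : β → List γ) (K : ℕ)

open Classical in
/-- The state is the part of the `x`-image of the `inl` letters read so far that is not yet
matched by the `f`-images of the `inr` letters; `none` records a failed match. -/
noncomputable def bufferStep : Option (List γ) → A ⊕ β → Option (List γ)
  | none, _ => none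
  | some b, .inl a => if (b ++ x a).length ≤ K then some (b ++ x a) else none
  | some b, .inr s => if f s <+: b then some (b.drop (f s).length) else none

noncomputable def bufferDFA : DFA (A ⊕ β) (Option (List γ)) where
  step := bufferStep x f K
  start := some []
  accept := {some []}

variable {x f K}

@[simp]
lemma bufferDFA_step : (bufferDFA x f K).step = bufferStep x f K := rfl

@[simp]
lemma bufferDFA_evalFrom_none (w : List (A ⊕ β)) : (bufferDFA x f K).evalFrom none w = none := by
  induction w with
  | nil => rfl
  | cons c w ih => exact ih

lemma bufferStep_some_inl {a : A} {b : List γ} (h : (b ++ x a).length ≤ K) :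
    bufferStep x f K (some b) (.inl a) = some (b ++ x a) :=
  if_pos h

lemma bufferDFA_evalFrom_map_inr (u : List β) (r : List γ) :
    (bufferDFA x f K).evalFrom (some (u.flatMap f ++ r)) (u.map .inr) = some r := by
  induction u with
  | nil => rfl
  | cons s u ih => simpa [bufferDFA, bufferStep, List.drop_left] using ih

lemma flatMap_eq_of_bufferDFA_evalFrom {w : List (A ⊕ β)} {b b' : List γ}
    (h : (bufferDFA x f K).evalFrom (some b) w = some b') :
    b ++ (w.filterMap Sum.getLeft?).flatMap x = (w.filterMap Sum.getRight?).flatMap f ++ b' := by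
  induction w generalizing b with
  | nil => simpa using h
  | cons c w ih =>
    rcases c with a | s <;> simp only [DFA.evalFrom_cons, bufferDFA_step, bufferStep] at h <;>
      split_ifs at h with hc
    · simpa [List.filterMap_cons] using ih h
    · simp at h
    · obtain ⟨t, rfl⟩ := hc
      simpa [List.filterMap_cons] using ih (by simpa using h)
    · simp at h

lemma bufferStep_length_le {o : Option (List γ)} (ho : ∀ b ∈ o, b.length ≤ K) (c : A ⊕ β) :
    ∀ b ∈ bufferStep x f K o c, b.length ≤ K := by
  intro b' hb'
  rcases o with _ | b
  · simp [bufferStep] at hb'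
  rcases c with a | s <;> simp only [bufferStep] at hb' <;> split_ifs at hb' with hc <;>
    simp only [Option.mem_def, Option.some.injEq, reduceCtorEq] at hb' <;> subst hb'
  · exact hc
  · simpa using le_trans (Nat.sub_le _ _) (ho b rfl)

lemma bufferDFA_evalFrom_length_le (w : List (A ⊕ β)) {o : Option (List γ)}
    (ho : ∀ b ∈ o, b.length ≤ K) : ∀ b ∈ (bufferDFA x f K).evalFrom o w, b.length ≤ K := by
  induction w generalizing o with
  | nil => exact ho
  | cons c w ih => exact ih (bufferStep_length_le ho c)

/-- Flushing greedily after each letter `inl a` leaves at most `c` unmatched symbols, so the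
buffer never exceeds `c + d`. -/
lemma exists_bufferDFA_evalFrom_eq_some_nil {c d : ℕ} (hc : ∀ s, (f s).length ≤ c)
    (hd : ∀ a, (x a).length ≤ d) (hK : c + d ≤ K) (as : List A) (u : List β) {b : List γ}
    (hb : b.length ≤ c) (h : b ++ as.flatMap x = u.flatMap f) :
    ∃ w : List (A ⊕ β), w.filterMap Sum.getLeft? = as ∧ w.filterMap Sum.getRight? = u ∧
      (bufferDFA x f K).evalFrom (some b) w = some [] := by
  induction as generalizing u b with
  | nil =>
    rw [List.flatMap_nil, List.append_nil] at h
    refine ⟨u.map .inr, by simp, by simp [Function.comp_def], ?_⟩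
    simpa [h] using bufferDFA_evalFrom_map_inr (x := x) (K := K) u []
  | cons a as ih =>
    rw [List.flatMap_cons, ← List.append_assoc] at h
    obtain ⟨u₁, u₂, b', rfl, hb₁, hrest, hb'⟩ :=
      List.exists_eq_flatMap_append_of_append_eq_flatMap hc u h
    obtain ⟨w, hl, hr, hw⟩ := ih u₂ hb' hrest
    have hlen : (b ++ x a).length ≤ K := by
      have := hd a
      simp only [List.length_append]
      omega
    refine ⟨.inl a :: (u₁.map .inr ++ w), by simp [hl],
      by simp [List.filterMap_cons, Function.comp_def, hr], ?_⟩
    rw [DFA.evalFrom_cons, bufferDFA_step, bufferStep_some_inl hlen, hb₁, DFA.evalFrom_of_append,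
      bufferDFA_evalFrom_map_inr, hw]

lemma flatMap_eq_of_mem_bufferDFA_accepts {w : List (A ⊕ β)} (hw : w ∈ (bufferDFA x f K).accepts) :
    (w.filterMap Sum.getLeft?).flatMap x = (w.filterMap Sum.getRight?).flatMap f := by
  simpa using flatMap_eq_of_bufferDFA_evalFrom (b := []) (b' := []) hw

lemma exists_mem_bufferDFA_accepts {c d : ℕ} (hc : ∀ s, (f s).length ≤ c)
    (hd : ∀ a, (x a).length ≤ d) (hK : c + d ≤ K) {as : List A} {u : List β}
    (h : as.flatMap x = u.flatMap f) :
    ∃ w ∈ (bufferDFA x f K).accepts,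
      w.filterMap Sum.getLeft? = as ∧ w.filterMap Sum.getRight? = u := by
  obtain ⟨w, hl, hr, hw⟩ :=
    exists_bufferDFA_evalFrom_eq_some_nil hc hd hK as u (Nat.zero_le c) (b := []) h
  exact ⟨w, hw, hl, hr⟩

theorem isRegular_bufferDFA_accepts [Finite γ] : (bufferDFA x f K).accepts.IsRegular := by
  refine (bufferDFA x f K).isRegular_accepts_of_finite_range_eval <|
    (((List.finite_length_le γ K).image some).insert none).subset ?_
  rintro _ ⟨w, rfl⟩
  have h := bufferDFA_evalFrom_length_le (x := x) (f := f) (K := K) w (o := some []) (by simp)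
  rcases hw : (bufferDFA x f K).eval w with _ | b
  · exact Set.mem_insert _ _
  · exact Set.mem_insert_of_mem _ ⟨b, h b hw, rfl⟩

end Buffer

namespace IsRationalSubset

variable {N P : Type*} [Monoid N] [Monoid P]

theorem of_isRegular {C : Type*} [Finite C] (φ : FreeMonoid C →* N) {L : Language C}
    (hL : L.IsRegular) : IsRationalSubset ((fun w => φ (FreeMonoid.ofList w)) '' L) := by
  obtain ⟨n, ⟨e⟩⟩ := Finite.exists_equiv_fin C
  refine ⟨Fin n, inferInstance, φ.comp (FreeMonoid.map e.symm), List.map e.symm ⁻¹' L,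
    hL.preimage _ fun _ _ => List.map_append, ?_⟩
  exact (Set.image_comp (fun w => φ (FreeMonoid.ofList w)) (List.map e.symm) _).trans
    (congrArg _ (Set.image_preimage_eq (L : Set (List C)) e.symm.surjective.list_map))

theorem image (g : N →* P) {R : Set N} (hR : IsRationalSubset R) :
    IsRationalSubset (g '' R) := by
  obtain ⟨A, hA, φ, L, hL, rfl⟩ := hR
  exact ⟨A, hA, g.comp φ, L, hL, (Set.image_image g (fun w => φ (FreeMonoid.ofList w)) L).symm⟩

theorem preimage_prodMap_id {β γ : Type*} [Finite β] [Finite γ]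
    (F : FreeMonoid β →* FreeMonoid γ) {R : Set (FreeMonoid γ × N)} (hR : IsRationalSubset R) :
    IsRationalSubset (Prod.map F id ⁻¹' R) := by
  obtain ⟨A, hA, φ, L, hL, rfl⟩ := hR
  set x : A → List γ := fun a => (φ (.of a)).1.toList
  set f : β → List γ := fun s => (F (.of s)).toList
  have hφ (as : List A) : (φ (.ofList as)).1 = .ofList (as.flatMap x) :=
    FreeMonoid.hom_ofList ((MonoidHom.fst _ _).comp φ) as
  obtain ⟨c, hc⟩ := (Set.finite_range fun s => (f s).length).bddAbove
  obtain ⟨d, hd⟩ := (Set.finite_range fun a => (x a).length).bddAbove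
  let ψ : FreeMonoid (A ⊕ β) →* FreeMonoid β × N :=
    { toFun := fun w => (.ofList (w.toList.filterMap Sum.getRight?),
        (φ (.ofList (w.toList.filterMap Sum.getLeft?))).2)
      map_one' := by simp
      map_mul' := by intro v w; simp [List.filterMap_append] }
  have hL' := (hL.preimage (List.filterMap Sum.getLeft?) fun _ _ => List.filterMap_append).inf
    (isRegular_bufferDFA_accepts (x := x) (f := f) (K := c + d))
  convert IsRationalSubset.of_isRegular ψ hL' using 1
  ext ⟨v, n⟩
  constructor
  · rintro ⟨as, has, heq⟩
    have hflat : as.flatMap x = v.toList.flatMap f := by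
      have h1 : (φ (.ofList as)).1 = F (.ofList v.toList) := congrArg Prod.fst heq
      rw [hφ, FreeMonoid.hom_ofList] at h1
      exact congrArg FreeMonoid.toList h1
    obtain ⟨w, hw, hl, hr⟩ :=
      exists_mem_bufferDFA_accepts (fun s => hc ⟨s, rfl⟩) (fun a => hd ⟨a, rfl⟩) le_rfl hflat
    refine ⟨w, ⟨show w.filterMap _ ∈ L by rwa [hl], hw⟩, ?_⟩
    change (FreeMonoid.ofList (w.filterMap _), (φ (FreeMonoid.ofList (w.filterMap _))).2) = _
    rw [hl, hr]
    exact Prod.ext rfl (congrArg Prod.snd heq :)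
  · rintro ⟨w, ⟨hwL, hw⟩, heq⟩
    obtain ⟨rfl, rfl⟩ : FreeMonoid.ofList (w.filterMap Sum.getRight?) = v ∧
        (φ (FreeMonoid.ofList (w.filterMap Sum.getLeft?))).2 = n := Prod.mk.inj heq
    refine ⟨_, hwL, Prod.ext ?_ rfl⟩
    change (φ _).1 = F (FreeMonoid.ofList _)
    rw [hφ, FreeMonoid.hom_ofList, flatMap_eq_of_mem_bufferDFA_accepts hw]

theorem preimage_id_prodMap {β γ : Type*} [Finite β] [Finite γ]
    (G : FreeMonoid β →* FreeMonoid γ) {R : Set (N × FreeMonoid γ)} (hR : IsRationalSubset R) :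
    IsRationalSubset (Prod.map id G ⁻¹' R) := by
  convert ((hR.image (MulEquiv.prodComm (M := N)).toMonoidHom).preimage_prodMap_id G).image
    (MulEquiv.prodComm (N := N)).toMonoidHom using 1
  ext ⟨n, v⟩
  simp

theorem preimage_prodMap {β γ β' γ' : Type*} [Finite β] [Finite γ] [Finite β'] [Finite γ']
    (F : FreeMonoid β →* FreeMonoid γ) (G : FreeMonoid β' →* FreeMonoid γ')
    {R : Set (FreeMonoid γ × FreeMonoid γ')} (hR : IsRationalSubset R) :
    IsRationalSubset (Prod.map F G ⁻¹' R) :=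
  (hR.preimage_prodMap_id F).preimage_id_prodMap G

end IsRationalSubset

section WordProblem

variable {M : Type*} [Monoid M]

theorem surjective_lift_coe_of_closure_eq_top {S : Finset M}
    (hS : Submonoid.closure (S : Set M) = ⊤) :
    Function.Surjective (FreeMonoid.lift fun s : S => (s : M)) := by
  rw [← MonoidHom.mrange_eq_top, FreeMonoid.mrange_lift, Subtype.range_coe_subtype]
  exact hS

theorem wordProblem_eq_preimage {S S' : Finset M} (F : FreeMonoid S' →* FreeMonoid S)
    (hF : (FreeMonoid.lift fun s : S => (s : M)).comp F = FreeMonoid.lift fun t : S' => (t : M)) :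
    WordProblem S' = Prod.map F F ⁻¹' WordProblem S := by
  ext ⟨u, v⟩
  simp only [WordProblem, Set.mem_preimage, Prod.map, Set.mem_ofPred_eq, ← hF,
    MonoidHom.comp_apply]

theorem isRationalSubset_wordProblem_of_closure_eq_top {S S' : Finset M}
    (hS : Submonoid.closure (S : Set M) = ⊤) (h : IsRationalSubset (WordProblem S)) :
    IsRationalSubset (WordProblem S') := by
  have hsurj := surjective_lift_coe_of_closure_eq_top hS
  let F : FreeMonoid S' →* FreeMonoid S := FreeMonoid.lift fun t => Function.surjInv hsurj t
  have hF : (FreeMonoid.lift fun s : S => (s : M)).comp F = FreeMonoid.lift fun t : S' => (t : M) :=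
    FreeMonoid.hom_eq fun t => Function.surjInv_eq hsurj t
  rw [wordProblem_eq_preimage F hF]
  exact h.preimage_prodMap F F

end WordProblem

theorem wordProblem_rational_independent_of_generating_set_general
    (M : Type*) [Monoid M] (S S' : Finset M)
    (hSgen : Submonoid.closure (S : Set M) = ⊤)
    (hS'gen : Submonoid.closure (S' : Set M) = ⊤) :
    IsRationalSubset (WordProblem S) ↔ IsRationalSubset (WordProblem S') :=
  ⟨isRationalSubset_wordProblem_of_closure_eq_top hSgen,
    isRationalSubset_wordProblem_of_closure_eq_top hS'gen⟩

theorem wordProblem_rational_independent_of_generating_set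
    (M : Type*) [Monoid M] (S S' : Finset M)
    (hS1 : (S : Set M) ⊆ {g : M | g ≠ 1}) (hS'1 : (S' : Set M) ⊆ {g : M | g ≠ 1})
    (hSgen : Submonoid.closure (S : Set M) = ⊤)
    (hS'gen : Submonoid.closure (S' : Set M) = ⊤) :
    IsRationalSubset (WordProblem S) ↔ IsRationalSubset (WordProblem S') :=
  wordProblem_rational_independent_of_generating_set_general M S S' hSgen hS'gen
end

section
/- Let G be a virtually free group generated by a finite set A, and let M be a graded submonoid of G generated by a finite set S ⊆ G \ {1}, with α : S* → G the canonical monoid homomorphism. Then there exists a constant C > 0 with the following property: for all words u, v ∈ S* with α(u) = α(v), there exists a word w over the alphabet Ŝ = (S × {1}) ∪ ({1} × S) whose projections to the first and second components are u and v respectively, such that every prefix p of w satisfies |α(π₁(p))⁻¹ · α(π₂(p))|_A ≤ C, where π₁, π₂ : Ŝ* → S* are the two component projection homomorphisms. -/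
universe u

/-- The word length of `g` with respect to the generating set `A`: the least `n`
such that `g` is a product of `n` elements of `A ∪ A⁻¹`. -/
noncomputable def wordLength {G : Type*} [Group G] (A : Set G) (g : G) : ℕ :=
  sInf {n : ℕ | ∃ l : List G, l.length = n ∧ (∀ x ∈ l, x ∈ A ∨ x⁻¹ ∈ A) ∧ l.prod = g}

/-- Projection to the first component: a letter `Sum.inl s` of the alphabet
`Ŝ = (S × {1}) ∪ ({1} × S)` projects to `s`, a letter `Sum.inr s` to the empty word. -/
def proj₁ {A : Type*} : FreeMonoid (A ⊕ A) →* FreeMonoid A :=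
  FreeMonoid.lift (Sum.elim FreeMonoid.of fun _ => 1)

/-- Projection to the second component. -/
def proj₂ {A : Type*} : FreeMonoid (A ⊕ A) →* FreeMonoid A :=
  FreeMonoid.lift (Sum.elim (fun _ => (1 : FreeMonoid A)) FreeMonoid.of)

/-!
Pass to a free subgroup `H` of finite index with a finite right transversal `T`, and record
`g = h * t` by the vertex `h` of the Cayley tree of `H` and by `t`. A factorization over `S` then
traces a walk with bounded steps in the tree. By gradedness, every element has only boundedly
long factorizations, so no two nested pieces of a walk can be pumped. A pigeonhole argument over
the ways a walk leaves and re-enters the subtrees below the vertices of a long geodesic segment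
then shows that every walk stays near the geodesic joining its endpoints and progresses along it
almost monotonically. Two factorizations of the same element give walks along the same geodesic;
advancing whichever is behind keeps them at bounded distance in the tree, which leaves finitely
many possible values for the quotient of the two partial products.
-/

namespace BoundedRelationPaths

open List

section CommonPrefix

variable {β : Type*} [DecidableEq β]

def lcp : List β → List β → ℕ
  | a :: l, b :: m => if a = b then lcp l m + 1 else 0
  | _, _ => 0

theorem le_lcp_iff {k : ℕ} : ∀ {l m : List β}, k ≤ lcp l m ↔ k ≤ l.length ∧ l.take k = m.take k
  | [], m => by cases m <;> simp [lcp]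
  | a :: l, [] => by cases k <;> simp [lcp]
  | a :: l, b :: m => by
    cases k with
    | zero => simp
    | succ k =>
      by_cases hab : a = b
      · simp [lcp, hab, le_lcp_iff (l := l) (m := m)]
      · simp [lcp, hab]

theorem lcp_le_length_left (l m : List β) : lcp l m ≤ l.length :=
  (le_lcp_iff.1 le_rfl).1

theorem take_lcp (l m : List β) : l.take (lcp l m) = m.take (lcp l m) :=
  (le_lcp_iff.1 le_rfl).2

theorem lcp_comm (l m : List β) : lcp l m = lcp m l := by
  have key : ∀ l m : List β, lcp l m ≤ lcp m l := fun l m => by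
    have h := take_lcp l m
    have hm : lcp l m ≤ m.length := by
      have := congrArg length h
      simp only [length_take] at this
      have := lcp_le_length_left l m
      omega
    exact le_lcp_iff.2 ⟨hm, h.symm⟩
  exact le_antisymm (key l m) (key m l)

theorem lcp_le_length_right (l m : List β) : lcp l m ≤ m.length :=
  lcp_comm l m ▸ lcp_le_length_left m l

theorem min_lcp_le_lcp (l m r : List β) : min (lcp l m) (lcp m r) ≤ lcp l r :=
  le_lcp_iff.2 ⟨(min_le_left _ _).trans (lcp_le_length_left l m), by
    rw [(le_lcp_iff.1 (min_le_left _ _)).2, (le_lcp_iff.1 (min_le_right _ _)).2]⟩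

theorem lcp_eq_length_of_prefix {l m : List β} (h : l <+: m) : lcp l m = l.length :=
  le_antisymm (lcp_le_length_left l m)
    (le_lcp_iff.2 ⟨le_rfl, by rw [take_length]; exact prefix_iff_eq_take.1 h⟩)

theorem lcp_self (l : List β) : lcp l l = l.length :=
  lcp_eq_length_of_prefix (prefix_refl l)

theorem length_le_lcp {l m r : List β} (hm : l <+: m) (hr : l <+: r) : l.length ≤ lcp m r :=
  le_lcp_iff.2 ⟨hm.length_le, by rw [← prefix_iff_eq_take.1 hm, ← prefix_iff_eq_take.1 hr]⟩

theorem getElem?_lcp_ne (l m : List β) {p q : β} (hp : l[lcp l m]? = some p)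
    (hq : m[lcp l m]? = some q) : p ≠ q := by
  rintro rfl
  have hlen : lcp l m < l.length := (List.getElem?_eq_some_iff.1 hp).1
  have : lcp l m + 1 ≤ lcp l m :=
    le_lcp_iff.2 ⟨hlen, by rw [take_add_one, take_add_one, take_lcp, hp, hq]⟩
  omega

end CommonPrefix

section Excursions

/-- The last exit before `i` and the first exit after `i` from a decreasing family of sets of
times `{k | P ℓ k}`, all containing `i` but neither `0` nor `n`. -/
theorem exists_nested_excursions (P : ℕ → ℕ → Prop) (hP : ∀ ℓ ℓ' k, ℓ ≤ ℓ' → P ℓ' k → P ℓ k)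
    {i n : ℕ} (hin : i ≤ n) (hi : ∀ ℓ, P ℓ i) (h0 : ∀ ℓ, ¬ P ℓ 0) (hn : ∀ ℓ, ¬ P ℓ n) :
    ∃ O R : ℕ → ℕ, Monotone O ∧ Antitone R ∧ ∀ ℓ, O ℓ < i ∧ i < R ℓ ∧ R ℓ ≤ n ∧
      ¬ P ℓ (O ℓ) ∧ P ℓ (O ℓ + 1) ∧ ¬ P ℓ (R ℓ) ∧ P ℓ (R ℓ - 1) := by
  classical
  have hin' : i < n := lt_of_le_of_ne hin fun h => hn 0 (h ▸ hi 0)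
  have hex : ∀ ℓ, ∃ k, i < k ∧ ¬ P ℓ k := fun ℓ => ⟨n, hin', hn ℓ⟩
  refine ⟨fun ℓ => Nat.findGreatest (fun k => ¬ P ℓ k) i, fun ℓ => Nat.find (hex ℓ),
    fun ℓ ℓ' h => Nat.findGreatest_mono_left (fun k hk hk' => hk (hP ℓ ℓ' k h hk')) i,
    fun ℓ ℓ' h => Nat.find_mono fun k hk => ⟨hk.1, fun h' => hk.2 (hP ℓ ℓ' k h h')⟩,
    fun ℓ => ?_⟩
  set O := Nat.findGreatest (fun k => ¬ P ℓ k) i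
  set R := Nat.find (hex ℓ)
  have hO : ¬ P ℓ O := Nat.findGreatest_spec (P := fun k => ¬ P ℓ k) (Nat.zero_le i) (h0 ℓ)
  have hOi : O < i := lt_of_le_of_ne (Nat.findGreatest_le i) fun h => hO (h ▸ hi ℓ)
  have hO1 : P ℓ (O + 1) := not_not.1 (Nat.findGreatest_is_greatest (lt_add_one O) hOi)
  obtain ⟨hiR, hR⟩ : i < R ∧ ¬ P ℓ R := Nat.find_spec (hex ℓ)
  have hRn : R ≤ n := Nat.find_min' (hex ℓ) ⟨hin', hn ℓ⟩
  have hR1 : P ℓ (R - 1) := by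
    rcases (Nat.le_sub_one_of_lt hiR).eq_or_lt with h | h
    · exact h ▸ hi ℓ
    · by_contra h'
      exact Nat.find_min (hex ℓ) (m := R - 1) (by omega) ⟨h, h'⟩
  exact ⟨hOi, hiR, hRn, hO, hO1, hR, hR1⟩

end Excursions

section Tree

open FreeGroup (mk invRev mul_mk inv_mk mk_toWord toWord_mk isReduced_toWord invRev_length)

variable {ι : Type*}

theorem isReduced_invRev {L : List (ι × Bool)} (h : FreeGroup.IsReduced L) :
    FreeGroup.IsReduced (invRev L) := by
  rw [FreeGroup.IsReduced, invRev, isChain_reverse, isChain_map]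
  exact h.imp fun a b hab heq => by simpa using (hab heq.symm).symm

theorem isReduced_invRev_append {a b : List (ι × Bool)} (ha : FreeGroup.IsReduced a)
    (hb : FreeGroup.IsReduced b) (hab : ∀ p ∈ a.head?, ∀ q ∈ b.head?, p ≠ q) :
    FreeGroup.IsReduced (invRev a ++ b) := by
  rw [FreeGroup.IsReduced, isChain_append]
  refine ⟨isReduced_invRev ha, hb, fun x hx y hy h1 => ?_⟩
  obtain ⟨p, r, rfl⟩ : ∃ p r, a = p :: r := by cases a <;> simp_all [invRev]
  have hx : x = (p.1, !p.2) := by simpa [invRev] using hx.symm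
  subst hx
  by_contra h2
  exact hab p rfl y hy (Prod.ext h1 (by simpa using h2))

variable [DecidableEq ι]

/-- The Gromov product `(g | h)₁` in the Cayley tree: the distance from `1` to the projection of
`g` to the geodesic from `1` to `h`. -/
def gromov (g h : FreeGroup ι) : ℕ := lcp g.toWord h.toWord

theorem gromov_comm (g h : FreeGroup ι) : gromov g h = gromov h g := lcp_comm _ _

theorem gromov_le_norm_left (g h : FreeGroup ι) : gromov g h ≤ g.norm := lcp_le_length_left _ _

theorem gromov_le_norm_right (g h : FreeGroup ι) : gromov g h ≤ h.norm :=
  lcp_le_length_right _ _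

theorem gromov_self (g : FreeGroup ι) : gromov g g = g.norm := lcp_self _

theorem gromov_one_left (g : FreeGroup ι) : gromov 1 g = 0 := by
  simp [gromov, lcp]

theorem min_gromov_le_gromov (a b c : FreeGroup ι) :
    min (gromov a b) (gromov b c) ≤ gromov a c := min_lcp_le_lcp _ _ _

theorem norm_inv_mul_add_two_mul_gromov (g h : FreeGroup ι) :
    (g⁻¹ * h).norm + 2 * gromov g h = g.norm + h.norm := by
  set k := gromov g h
  set a := g.toWord.drop k
  set b := h.toWord.drop k
  have hg : g = mk (g.toWord.take k) * mk a := by rw [mul_mk, take_append_drop, mk_toWord]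
  have hh : h = mk (g.toWord.take k) * mk b := by
    rw [show g.toWord.take k = h.toWord.take k from take_lcp _ _, mul_mk, take_append_drop,
      mk_toWord]
  have hgh : g⁻¹ * h = mk (invRev a ++ b) := by
    rw [← mul_mk, ← inv_mk]
    conv_lhs => rw [hg, hh]
    group
  have hred : FreeGroup.IsReduced (invRev a ++ b) :=
    isReduced_invRev_append (isReduced_toWord.infix (drop_suffix ..).isInfix)
      (isReduced_toWord.infix (drop_suffix ..).isInfix) fun p hp q hq =>
        getElem?_lcp_ne _ _ (by simpa [a] using hp : g.toWord[k]? = some p)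
          (by simpa [b] using hq : h.toWord[k]? = some q)
  have hnorm : (g⁻¹ * h).norm = a.length + b.length := by
    rw [hgh, FreeGroup.norm, toWord_mk, hred.reduce_eq, length_append, invRev_length]
  have hk1 : k ≤ g.norm := gromov_le_norm_left g h
  have hk2 : k ≤ h.norm := gromov_le_norm_right g h
  simp only [hnorm, a, b, length_drop]
  unfold FreeGroup.norm at hk1 hk2 ⊢
  omega

/-- The vertex at distance `ℓ` from `1` on the geodesic from `1` to `g` (or `g` itself). -/
def geodesicVertex (g : FreeGroup ι) (ℓ : ℕ) : FreeGroup ι := mk (g.toWord.take ℓ)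

theorem toWord_geodesicVertex (g : FreeGroup ι) (ℓ : ℕ) :
    (geodesicVertex g ℓ).toWord = g.toWord.take ℓ := by
  rw [geodesicVertex, toWord_mk, (isReduced_toWord.infix (take_prefix ℓ _).isInfix).reduce_eq]

theorem norm_geodesicVertex (g : FreeGroup ι) (ℓ : ℕ) :
    (geodesicVertex g ℓ).norm = min ℓ g.norm := by
  rw [FreeGroup.norm, toWord_geodesicVertex, length_take]; rfl

/-- The step from `g` to `g'` enters the subtree below `v`. -/
def EntersBelow (v g g' : FreeGroup ι) : Prop := ¬ v.toWord <+: g.toWord ∧ v.toWord <+: g'.toWord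

theorem EntersBelow.norm_inv_mul_le {v g g' : FreeGroup ι} (h : EntersBelow v g g') :
    (v⁻¹ * g).norm ≤ (g⁻¹ * g').norm := by
  obtain ⟨hout, hin⟩ := h
  have hvg' : gromov v g' = v.norm := lcp_eq_length_of_prefix hin
  have hgg' : gromov g g' < v.norm := by
    by_contra! hle
    obtain ⟨-, htake⟩ := le_lcp_iff.1 hle
    have hv : v.toWord = g.toWord.take v.norm := by rw [htake]; exact prefix_iff_eq_take.1 hin
    exact hout (hv ▸ take_prefix _ _)
  have hvg := min_gromov_le_gromov v g' g
  have hv : v.norm ≤ g'.norm := hin.length_le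
  rw [gromov_comm g'] at hvg
  have e1 := norm_inv_mul_add_two_mul_gromov v g
  have e2 := norm_inv_mul_add_two_mul_gromov g g'
  omega

/-- If `γ i` lies off the geodesic from `γ 0 = 1` to `γ n`, then the subtrees below the vertices
of the geodesic to `γ i` beyond the branch point are entered last before `i` and left first after
`i` at nested times. -/
theorem exists_nested_entries {γ : ℕ → FreeGroup ι} (h0 : γ 0 = 1) {i n : ℕ} (hin : i ≤ n)
    (hfar : gromov (γ i) (γ n) < (γ i).norm) :
    ∃ O R : ℕ → ℕ, Monotone O ∧ Antitone R ∧ ∀ ℓ, O ℓ < i ∧ i < R ℓ ∧ R ℓ ≤ n ∧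
      EntersBelow (geodesicVertex (γ i) (gromov (γ i) (γ n) + 1 + ℓ)) (γ (O ℓ)) (γ (O ℓ + 1)) ∧
      EntersBelow (geodesicVertex (γ i) (gromov (γ i) (γ n) + 1 + ℓ)) (γ (R ℓ)) (γ (R ℓ - 1)) := by
  set m := gromov (γ i) (γ n)
  have hv := fun ℓ => toWord_geodesicVertex (γ i) (m + 1 + ℓ)
  have hvlen : ∀ ℓ, m < (geodesicVertex (γ i) (m + 1 + ℓ)).norm := fun ℓ => by
    rw [norm_geodesicVertex]; omega
  obtain ⟨O, R, hO, hR, hOR⟩ := exists_nested_excursions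
    (fun ℓ k => (geodesicVertex (γ i) (m + 1 + ℓ)).toWord <+: (γ k).toWord)
    (fun ℓ ℓ' k h hk => by
      simp only [hv] at hk ⊢
      exact (take_isPrefix_take.2 (Or.inl (by omega))).trans hk)
    hin (fun ℓ => by simp only [hv]; exact take_prefix _ _)
    (fun ℓ h => by
      simp only [h0, FreeGroup.toWord_one, prefix_nil] at h
      simpa [FreeGroup.norm, h] using hvlen ℓ)
    (fun ℓ h => (hvlen ℓ).not_ge (length_le_lcp (hv ℓ ▸ take_prefix _ _) h))
  exact ⟨O, R, hO, hR, fun ℓ => by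
    obtain ⟨h1, h2, h3, h4, h5, h6, h7⟩ := hOR ℓ
    exact ⟨h1, h2, h3, ⟨h4, h5⟩, ⟨h6, h7⟩⟩⟩

theorem gromov_le_gromov_add_norm (h h' g : FreeGroup ι) :
    gromov h' g ≤ gromov h g + (h⁻¹ * h').norm := by
  have e := norm_inv_mul_add_two_mul_gromov h h'
  have t := min_gromov_le_gromov h h' g
  have := gromov_le_norm_left h' g
  have := gromov_le_norm_left h h'
  omega

theorem norm_inv_mul_le_of_near_geodesic {a b h : FreeGroup ι} {K M : ℕ}
    (ha : a.norm ≤ gromov a h + K) (hb : b.norm ≤ gromov b h + K)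
    (hab : gromov a h ≤ gromov b h + M) (hba : gromov b h ≤ gromov a h + M) :
    (a⁻¹ * b).norm ≤ 2 * K + M := by
  have e := norm_inv_mul_add_two_mul_gromov a b
  have t := min_gromov_le_gromov a h b
  rw [gromov_comm h b] at t
  omega

/-- If `x` lies within `K` of the geodesic from `z` to `y`, then the projection of `x` to
the geodesic from `1` to `y` is at most `K` below that of `z`. -/
theorem gromov_le_gromov_add_of_norm_le {x y z : FreeGroup ι} {K : ℕ}
    (h : (z⁻¹ * x).norm ≤ gromov (z⁻¹ * x) (z⁻¹ * y) + K) : gromov z y ≤ gromov x y + K := by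
  have e1 := norm_inv_mul_add_two_mul_gromov z x
  have e2 := norm_inv_mul_add_two_mul_gromov z y
  have e3 := norm_inv_mul_add_two_mul_gromov x y
  have e4 := norm_inv_mul_add_two_mul_gromov (z⁻¹ * x) (z⁻¹ * y)
  rw [show (z⁻¹ * x)⁻¹ * (z⁻¹ * y) = x⁻¹ * y by group] at e4
  have := gromov_le_norm_right z x
  omega

end Tree

section Letters

open FreeGroup (mk)

variable {ι : Type*} [DecidableEq ι]

def letterSubgroup (J : Set ι) : Subgroup (FreeGroup ι) where
  carrier := {z | ∀ p ∈ z.toWord, p.1 ∈ J}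
  one_mem' := by simp
  mul_mem' {a b} ha hb p hp :=
    (mem_append.1 ((FreeGroup.toWord_mul_sublist a b).subset hp)).elim (ha p) (hb p)
  inv_mem' {a} ha p hp := by
    simp only [FreeGroup.toWord_inv, FreeGroup.invRev, mem_reverse, mem_map] at hp
    obtain ⟨q, hq, rfl⟩ := hp
    exact ha q hq

variable {J : Set ι}

theorem geodesicVertex_mem_letterSubgroup {z : FreeGroup ι} (hz : z ∈ letterSubgroup J)
    (ℓ : ℕ) : geodesicVertex z ℓ ∈ letterSubgroup J := fun p hp =>
  hz p (mem_of_mem_take (toWord_geodesicVertex z ℓ ▸ hp))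

theorem exists_finite_subset_letterSubgroup {D : Set (FreeGroup ι)} (hD : D.Finite) :
    ∃ J : Set ι, J.Finite ∧ D ⊆ letterSubgroup J :=
  ⟨⋃ d ∈ D, Prod.fst '' {p | p ∈ d.toWord},
    hD.biUnion fun d _ => d.toWord.finite_toSet.image _,
    fun _ hd p hp => Set.mem_biUnion hd ⟨p, hp, rfl⟩⟩

theorem finite_letterSubgroup_norm_le (hJ : J.Finite) (r : ℕ) :
    {z | z ∈ letterSubgroup J ∧ z.norm ≤ r}.Finite := by
  have := hJ.to_subtype
  refine ((List.finite_length_le (J × Bool) r).image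
    fun l => mk (l.map fun p => (p.1.1, p.2))).subset ?_
  rintro z ⟨hz, hr⟩
  refine ⟨z.toWord.attach.map fun p => (⟨p.1.1, hz p.1 p.2⟩, p.1.2),
    by simp only [Set.mem_ofPred_eq, length_map, length_attach]; exact hr, ?_⟩
  simp only [map_map, Function.comp_def]
  rw [attach_map_subtype_val, FreeGroup.mk_toWord]

end Letters

section Walks

variable {G : Type*} [Group G] (S : Set G)

def IsWalk (n : ℕ) (x : ℕ → G) : Prop := ∀ k < n, (x k)⁻¹ * x (k + 1) ∈ S

def BoundedFactorizations : Prop :=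
  ∀ g : G, ∃ N : ℕ, ∀ l : List G, (∀ s ∈ l, s ∈ S) → l.prod = g → l.length ≤ N

variable {S}

theorem boundedFactorizations_of_isGraded (hS : (1 : G) ∉ S)
    (h : IsGraded (Submonoid.closure S)) : BoundedFactorizations S := by
  obtain ⟨X, -, β, hsurj, hfib⟩ := h
  intro g
  by_cases hg : g ∈ Submonoid.closure S
  swap
  · exact ⟨0, fun l hl hprod => absurd (hprod ▸ Submonoid.list_prod_mem _
      fun s hs => Submonoid.subset_closure (hl s hs)) hg⟩
  obtain ⟨N, hN⟩ := ((hfib ⟨g, hg⟩).image FreeMonoid.length).bddAbove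
  refine ⟨N, fun l hl hprod => ?_⟩
  set c := Function.surjInv hsurj
  set ls : List (Submonoid.closure S) := l.pmap (fun s hs => ⟨s, Submonoid.subset_closure hs⟩) hl
  have hβ : β (ls.map c).prod = ⟨g, hg⟩ := by
    apply Subtype.ext
    simp [map_list_prod, ls, c, SubmonoidClass.coe_list_prod, map_pmap,
      Function.surjInv_eq hsurj, ← hprod]
  have hlen : l.length ≤ ((ls.map c).prod).length := by
    rw [FreeMonoid.length, FreeMonoid.toList_prod, length_flatten]
    refine (le_of_eq (by simp [ls])).trans (List.length_le_sum_of_one_le _ ?_)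
    simp only [map_map, mem_map, Function.comp_apply]
    rintro _ ⟨y, hy, rfl⟩
    obtain ⟨s, hs, rfl⟩ := mem_pmap.1 hy
    refine Nat.one_le_iff_ne_zero.2 fun h0 => hS ?_
    have h1 : β (c _) = _ := Function.surjInv_eq hsurj ⟨s, Submonoid.subset_closure (hl s hs)⟩
    rw [FreeMonoid.length_eq_zero.1 h0, map_one] at h1
    have hs1 : s = 1 := (congrArg Subtype.val h1).symm
    exact hs1 ▸ hl s hs
  exact hlen.trans (hN ⟨_, hβ, rfl⟩)

variable {x : ℕ → G} {n : ℕ}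

def segment (x : ℕ → G) (a b : ℕ) : List G :=
  (range' a (b - a)).map fun j => (x j)⁻¹ * x (j + 1)

theorem segment_succ {a b : ℕ} (h : a ≤ b) :
    segment x a (b + 1) = segment x a b ++ [(x b)⁻¹ * x (b + 1)] := by
  simp only [segment, show b + 1 - a = b - a + 1 by omega, range'_concat, map_append, map_cons,
    map_nil, one_mul, Nat.add_sub_cancel' h]

theorem prod_segment {a b : ℕ} (h : a ≤ b) : (segment x a b).prod = (x a)⁻¹ * x b := by
  induction b, h using Nat.le_induction with
  | base => simp [segment]
  | succ b hab ih => rw [segment_succ hab, prod_append, ih]; simp [mul_assoc]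

theorem length_segment (a b : ℕ) : (segment x a b).length = b - a := by simp [segment]

theorem isWalk_prod_take {l : List G} (hl : ∀ s ∈ l, s ∈ S) :
    IsWalk S l.length fun k => (l.take k).prod := fun k hk => by
  simp only [prod_take_succ l k hk, inv_mul_cancel_left]
  exact hl _ (getElem_mem hk)

theorem IsWalk.shift (hx : IsWalk S n x) (j : ℕ) : IsWalk S (n - j) fun k => x (j + k) :=
  fun k hk => hx (j + k) (by omega)

theorem IsWalk.mem_segment (hx : IsWalk S n x) {a b : ℕ} (hb : b ≤ n) :
    ∀ s ∈ segment x a b, s ∈ S := by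
  simp only [segment, mem_map, mem_range']
  rintro _ ⟨_, ⟨i, hi, rfl⟩, rfl⟩
  exact hx _ (by omega)

/-- Otherwise the pieces `k₁ → k₂` and `k₃ → k₄` could be pumped simultaneously, giving
arbitrarily long factorizations of `(x 0)⁻¹ * x n`. -/
theorem IsWalk.inv_mul_ne_inv_mul (hB : BoundedFactorizations S) (hx : IsWalk S n x)
    {k₁ k₂ k₃ k₄ : ℕ} (h12 : k₁ < k₂) (h23 : k₂ ≤ k₃) (h34 : k₃ ≤ k₄) (h4 : k₄ ≤ n) :
    (x k₁)⁻¹ * x k₄ ≠ (x k₂)⁻¹ * x k₃ := by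
  intro heq
  obtain ⟨N, hN⟩ := hB ((x 0)⁻¹ * x n)
  set q := (x k₁)⁻¹ * x k₂
  set r := (x k₂)⁻¹ * x k₃
  set t := (x k₃)⁻¹ * x k₄
  have hloop : ∀ m : ℕ, q ^ m * r * t ^ m = r := by
    intro m
    induction m with
    | zero => simp
    | succ m ih =>
      calc q ^ (m + 1) * r * t ^ (m + 1) = q * (q ^ m * r * t ^ m) * t := by group
        _ = (x k₁)⁻¹ * x k₄ := by rw [ih]; simp only [q, r, t]; group
        _ = r := heq
  set word := segment x 0 k₁ ++ (replicate (N + 1) (segment x k₁ k₂)).flatten ++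
    segment x k₂ k₃ ++ (replicate (N + 1) (segment x k₃ k₄)).flatten ++ segment x k₄ n
  have hmem : ∀ s ∈ word, s ∈ S := by
    simp only [word, mem_append, mem_flatten, mem_replicate]
    rintro s ((((hs | ⟨_, ⟨-, rfl⟩, hs⟩) | hs) | ⟨_, ⟨-, rfl⟩, hs⟩) | hs) <;>
      exact hx.mem_segment (by omega) s hs
  have hprod : word.prod = (x 0)⁻¹ * x n := by
    simp only [word, prod_append, prod_flatten, map_replicate, prod_replicate,
      prod_segment (Nat.zero_le k₁), prod_segment h12.le, prod_segment h23, prod_segment h34,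
      prod_segment h4]
    calc (x 0)⁻¹ * x k₁ * q ^ (N + 1) * r * t ^ (N + 1) * ((x k₄)⁻¹ * x n)
        = (x 0)⁻¹ * x k₁ * (q ^ (N + 1) * r * t ^ (N + 1)) * ((x k₄)⁻¹ * x n) := by group
      _ = (x 0)⁻¹ * x n := by rw [hloop, ← heq]; group
  have hlen : N + 1 ≤ word.length := by
    simp only [word, length_append, length_flatten, map_replicate, sum_replicate, length_segment,
      smul_eq_mul]
    have := Nat.mul_le_mul_left (N + 1) (show 1 ≤ k₂ - k₁ by omega)
    omega
  have := hN word hmem hprod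
  omega

end Walks

section Interleaving

variable {A : Type*}

theorem exists_interleaving (us vs : List A) (Inv : ℕ → ℕ → Prop) (h0 : Inv 0 0)
    (hstep : ∀ i j, Inv i j → i ≤ us.length → j ≤ vs.length → i < us.length ∨ j < vs.length →
      (i < us.length ∧ Inv (i + 1) j) ∨ (j < vs.length ∧ Inv i (j + 1))) :
    ∃ w : List (A ⊕ A), w.filterMap Sum.getLeft? = us ∧ w.filterMap Sum.getRight? = vs ∧
      ∀ p, p <+: w → Inv (p.filterMap Sum.getLeft?).length (p.filterMap Sum.getRight?).length := by
  suffices ∀ k i j, us.length - i + (vs.length - j) = k → i ≤ us.length → j ≤ vs.length →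
      Inv i j → ∃ w : List (A ⊕ A), w.filterMap Sum.getLeft? = us.drop i ∧
        w.filterMap Sum.getRight? = vs.drop j ∧ ∀ p, p <+: w →
          Inv (i + (p.filterMap Sum.getLeft?).length) (j + (p.filterMap Sum.getRight?).length) by
    simpa using this _ 0 0 rfl (Nat.zero_le _) (Nat.zero_le _) h0
  intro k
  induction k with
  | zero =>
    intro i j hk hi hj hinv
    refine ⟨[], by simp [drop_eq_nil_of_le (show us.length ≤ i by omega)],
      by simp [drop_eq_nil_of_le (show vs.length ≤ j by omega)], fun p hp => ?_⟩
    simpa [prefix_nil.1 hp] using hinv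
  | succ k ih =>
    intro i j hk hi hj hinv
    rcases hstep i j hinv hi hj (by omega) with ⟨hi', hinv'⟩ | ⟨hj', hinv'⟩
    · obtain ⟨w, hl, hr, hw⟩ := ih (i + 1) j (by omega) hi' hj hinv'
      refine ⟨Sum.inl us[i] :: w, ?_, by simpa only [filterMap_cons, Sum.getRight?_inl],
        fun p hp => ?_⟩
      · simp only [filterMap_cons, Sum.getLeft?_inl, hl, drop_eq_getElem_cons hi']
      rcases prefix_cons_iff.1 hp with rfl | ⟨t, rfl, ht⟩
      · simpa using hinv
      · have h := hw t ht
        rw [add_right_comm i 1, add_assoc] at h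
        simpa only [filterMap_cons, Sum.getLeft?_inl, Sum.getRight?_inl, length_cons]
    · obtain ⟨w, hl, hr, hw⟩ := ih i (j + 1) (by omega) hi hj' hinv'
      refine ⟨Sum.inr vs[j] :: w, by simpa only [filterMap_cons, Sum.getLeft?_inr],
        ?_, fun p hp => ?_⟩
      · simp only [filterMap_cons, Sum.getRight?_inr, hr, drop_eq_getElem_cons hj']
      rcases prefix_cons_iff.1 hp with rfl | ⟨t, rfl, ht⟩
      · simpa using hinv
      · have h := hw t ht
        rw [add_right_comm j 1, add_assoc] at h
        simpa only [filterMap_cons, Sum.getLeft?_inr, Sum.getRight?_inr, length_cons]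

theorem exists_interleaving_near (us vs : List A) {f g : ℕ → ℕ} {L : ℕ} (hf : Monotone f)
    (hg : Monotone g) (hfL : ∀ i < us.length, f (i + 1) ≤ f i + L)
    (hgL : ∀ j < vs.length, g (j + 1) ≤ g j + L) (h0 : f 0 = g 0)
    (hend : f us.length = g vs.length) :
    ∃ w : List (A ⊕ A), w.filterMap Sum.getLeft? = us ∧ w.filterMap Sum.getRight? = vs ∧
      ∀ p, p <+: w →
        f (p.filterMap Sum.getLeft?).length ≤ g (p.filterMap Sum.getRight?).length + L ∧
          g (p.filterMap Sum.getRight?).length ≤ f (p.filterMap Sum.getLeft?).length + L := by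
  refine exists_interleaving us vs (fun i j => f i ≤ g j + L ∧ g j ≤ f i + L) (by omega)
    fun i j ⟨h1, h2⟩ hi hj hij => ?_
  -- advance whichever of `f` and `g` is behind
  by_cases hcase : i < us.length ∧ (j = vs.length ∨ f i ≤ g j)
  · obtain ⟨hi', hcase⟩ := hcase
    have := hfL i hi'
    have := hf (Nat.le_add_right i 1)
    have := hf (show i + 1 ≤ us.length from hi')
    refine Or.inl ⟨hi', ?_, by omega⟩
    rcases hcase with rfl | hcase <;> omega
  · have hj' : j < vs.length := by omega
    have := hgL j hj'
    have := hg (Nat.le_add_right j 1)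
    have := hg (show j + 1 ≤ vs.length from hj')
    refine Or.inr ⟨hj', by omega, ?_⟩
    by_cases hi'' : i = us.length
    · subst hi''; omega
    · omega

end Interleaving

structure VirtuallyFreeData (G : Type u) [Group G] where
  H : Subgroup G
  ι : Type u
  [decEq : DecidableEq ι]
  φ : H ≃* FreeGroup ι
  T : Set G
  isComplement : Subgroup.IsComplement (H : Set G) T
  finite_T : T.Finite

attribute [instance] VirtuallyFreeData.decEq

theorem VirtuallyFreeData.nonempty_of_virtuallyFree {G : Type u} [Group G] (h : VirtuallyFree G) :
    Nonempty (VirtuallyFreeData G) := by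
  obtain ⟨H, hH, ι, ⟨φ⟩⟩ := h
  obtain ⟨T, hT, -⟩ := H.exists_isComplement_right 1
  have := Classical.decEq ι
  exact ⟨⟨H, ι, φ, T, hT, hT.finite_right⟩⟩

namespace VirtuallyFreeData

variable {G : Type u} [Group G] (c : VirtuallyFreeData G)

/-- Writing `g = h * t` with `h ∈ H` and `t ∈ T`, the free-group coordinate `φ h` of `g`. -/
noncomputable def coord (g : G) : FreeGroup c.ι := c.φ (c.isComplement.equiv g).1

noncomputable def rep (g : G) : G := (c.isComplement.equiv g).2

theorem rep_mem (g : G) : c.rep g ∈ c.T := (c.isComplement.equiv g).2.2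

theorem symm_coord_mul_rep (g : G) : (c.φ.symm (c.coord g) : G) * c.rep g = g := by
  simpa [coord, rep] using c.isComplement.equiv_fst_mul_equiv_snd g

theorem coord_mul (g a : G) : c.coord (g * a) = c.coord g * c.coord (c.rep g * a) := by
  have h : g * a = ((c.isComplement.equiv g).1 : G) * (c.rep g * a) := by
    rw [← mul_assoc, rep, Subgroup.IsComplement.equiv_fst_mul_equiv_snd]
  rw [coord, coord, coord, h, Subgroup.IsComplement.equiv_mul_left, ← map_mul]

theorem inv_mul_eq_symm_mul (a b : G) :
    a⁻¹ * b = (c.rep a)⁻¹ * c.φ.symm ((c.coord a)⁻¹ * c.coord b) * c.rep b := by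
  conv_lhs => rw [← c.symm_coord_mul_rep a, ← c.symm_coord_mul_rep b]
  simp only [map_mul, map_inv, Subgroup.coe_mul, Subgroup.coe_inv]
  group

theorem inv_mul_eq_inv_mul {a b a' b' : G}
    (hab : (c.coord a)⁻¹ * c.coord b = (c.coord a')⁻¹ * c.coord b')
    (ha : c.rep a = c.rep a') (hb : c.rep b = c.rep b') : a⁻¹ * b = a'⁻¹ * b' := by
  rw [c.inv_mul_eq_symm_mul, c.inv_mul_eq_symm_mul a', hab, ha, hb]

theorem finite_inv_mul {Z : Set (FreeGroup c.ι)} (hZ : Z.Finite) :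
    {g | ∃ a b : G, (c.coord a)⁻¹ * c.coord b ∈ Z ∧ a⁻¹ * b = g}.Finite := by
  refine ((c.finite_T.prod (hZ.prod c.finite_T)).image
    fun p => p.1⁻¹ * (c.φ.symm p.2.1 : G) * p.2.2).subset ?_
  rintro _ ⟨a, b, hz, rfl⟩
  exact ⟨(c.rep a, _, c.rep b), ⟨c.rep_mem a, hz, c.rep_mem b⟩, (c.inv_mul_eq_symm_mul a b).symm⟩

variable {S : Set G} {x : ℕ → G} {n : ℕ}

def steps (S : Set G) : Set (FreeGroup c.ι) := Set.image2 (fun t s => c.coord (t * s)) c.T S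

theorem finite_steps (hS : S.Finite) : (c.steps S).Finite := c.finite_T.image2 _ hS

/-- The walk `x` read in the Cayley tree of `FreeGroup c.ι`, translated to start at `1`. -/
noncomputable def trace (x : ℕ → G) (k : ℕ) : FreeGroup c.ι := (c.coord (x 0))⁻¹ * c.coord (x k)

theorem trace_zero : c.trace x 0 = 1 := inv_mul_cancel _

theorem inv_trace_mul_trace (a b : ℕ) :
    (c.trace x a)⁻¹ * c.trace x b = (c.coord (x a))⁻¹ * c.coord (x b) := by
  simp only [trace]; group

theorem trace_step_mem (hx : IsWalk S n x) {k : ℕ} (hk : k < n) :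
    (c.trace x k)⁻¹ * c.trace x (k + 1) ∈ c.steps S := by
  rw [inv_trace_mul_trace, show x (k + 1) = x k * ((x k)⁻¹ * x (k + 1)) by group, coord_mul,
    inv_mul_cancel_left]
  exact ⟨c.rep (x k), c.rep_mem _, _, hx k hk, rfl⟩

theorem trace_mem_letterSubgroup {J : Set c.ι} (hJ : c.steps S ⊆ letterSubgroup J)
    (hx : IsWalk S n x) {k : ℕ} (hk : k ≤ n) : c.trace x k ∈ letterSubgroup J := by
  induction k with
  | zero => rw [trace_zero]; exact one_mem _
  | succ k ih =>
    simpa using mul_mem (ih (by omega)) (hJ (c.trace_step_mem hx (k := k) (by omega)))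

/-- Nested crossings that look the same from `v` and from `v'` could be pumped. -/
theorem eq_of_nested_crossings (hB : BoundedFactorizations S) (hx : IsWalk S n x)
    {a a' b b' : ℕ} {v v' : FreeGroup c.ι} (h1 : a ≤ a') (h2 : a' ≤ b') (h3 : b' ≤ b) (h4 : b ≤ n)
    (ha : (v⁻¹ * c.trace x a, c.rep (x a)) = (v'⁻¹ * c.trace x a', c.rep (x a')))
    (hb : (v⁻¹ * c.trace x b, c.rep (x b)) = (v'⁻¹ * c.trace x b', c.rep (x b'))) : v = v' := by
  simp only [Prod.mk.injEq] at ha hb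
  rcases h1.eq_or_lt with rfl | hlt
  · simpa using ha.1
  refine absurd (c.inv_mul_eq_inv_mul ?_ ha.2 hb.2) (hx.inv_mul_ne_inv_mul hB hlt h2 h3 h4)
  rw [← inv_trace_mul_trace, ← inv_trace_mul_trace]
  calc (c.trace x a)⁻¹ * c.trace x b = (v⁻¹ * c.trace x a)⁻¹ * (v⁻¹ * c.trace x b) := by group
    _ = (v'⁻¹ * c.trace x a')⁻¹ * (v'⁻¹ * c.trace x b') := by rw [ha.1, hb.1]
    _ = (c.trace x a')⁻¹ * c.trace x b' := by group

theorem inv_mul_trace_mem_of_entersBelow {L : ℕ} {J : Set c.ι}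
    (hL : ∀ d ∈ c.steps S, d.norm ≤ L) (hJ : c.steps S ⊆ letterSubgroup J) (hx : IsWalk S n x)
    {v : FreeGroup c.ι} (hv : v ∈ letterSubgroup J) {k k' : ℕ} (hkk' : k' = k + 1 ∨ k = k' + 1)
    (hk : k ≤ n) (hk' : k' ≤ n) (h : EntersBelow v (c.trace x k) (c.trace x k')) :
    v⁻¹ * c.trace x k ∈ letterSubgroup J ∧ (v⁻¹ * c.trace x k).norm ≤ L := by
  refine ⟨mul_mem (inv_mem hv) (c.trace_mem_letterSubgroup hJ hx hk), h.norm_inv_mul_le.trans ?_⟩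
  rcases hkk' with rfl | rfl
  · exact hL _ (c.trace_step_mem hx hk')
  · rw [← FreeGroup.norm_inv_eq, mul_inv_rev, inv_inv]
    exact hL _ (c.trace_step_mem hx hk)

/-- A walk stays within bounded distance of the geodesic in the Cayley tree joining its
endpoints: otherwise, pigeonholing the ways it leaves and re-enters the subtrees below the
vertices of a long stretch of the geodesic to a far point yields two nested excursions of the
same shape, which can be pumped. -/
theorem exists_norm_trace_le_gromov_add (hS : S.Finite) (hB : BoundedFactorizations S) :
    ∃ K, ∀ (x : ℕ → G) (n : ℕ), IsWalk S n x → ∀ i ≤ n,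
      (c.trace x i).norm ≤ gromov (c.trace x i) (c.trace x n) + K := by
  obtain ⟨J, hJ, hDJ⟩ := exists_finite_subset_letterSubgroup (c.finite_steps hS)
  obtain ⟨L, hL⟩ := ((c.finite_steps hS).image FreeGroup.norm).bddAbove
  replace hL : ∀ d ∈ c.steps S, d.norm ≤ L := fun d hd => hL ⟨d, hd, rfl⟩
  set ball := {z | z ∈ letterSubgroup J ∧ z.norm ≤ L}
  have hstates : ((ball ×ˢ c.T) ×ˢ (ball ×ˢ c.T)).Finite := by
    have h := (finite_letterSubgroup_norm_le hJ L).prod c.finite_T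
    exact h.prod h
  refine ⟨hstates.toFinset.card, fun x n hx i hi => ?_⟩
  by_contra! hfar
  set N := hstates.toFinset.card
  set m := gromov (c.trace x i) (c.trace x n)
  obtain ⟨O, R, hO, hR, hOR⟩ := exists_nested_entries (γ := c.trace x) c.trace_zero hi (by omega)
  set v := fun ℓ => geodesicVertex (c.trace x i) (m + 1 + ℓ)
  set state := fun ℓ => (((v ℓ)⁻¹ * c.trace x (O ℓ), c.rep (x (O ℓ))),
    ((v ℓ)⁻¹ * c.trace x (R ℓ), c.rep (x (R ℓ))))
  have hmaps : Set.MapsTo state (Finset.range (N + 1)) hstates.toFinset := fun ℓ _ => by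
    obtain ⟨hOi, hiR, hRn, hOin, hRin⟩ := hOR ℓ
    have hvJ := geodesicVertex_mem_letterSubgroup (c.trace_mem_letterSubgroup hDJ hx hi)
      (m + 1 + ℓ)
    simp only [Set.Finite.coe_toFinset, Set.mem_prod]
    exact ⟨⟨c.inv_mul_trace_mem_of_entersBelow hL hDJ hx hvJ (Or.inl rfl) (by omega) (by omega)
      hOin, c.rep_mem _⟩, ⟨c.inv_mul_trace_mem_of_entersBelow hL hDJ hx hvJ (k' := R ℓ - 1)
      (Or.inr (by omega)) (by omega) (by omega) hRin, c.rep_mem _⟩⟩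
  obtain ⟨ℓ₁, h₁, ℓ₂, h₂, hne, heq⟩ :=
    Finset.exists_ne_map_eq_of_card_lt_of_maps_to (by simp [N]) hmaps
  have key : ∀ ℓ ℓ', ℓ < ℓ' → ℓ' ≤ N → state ℓ = state ℓ' → False := fun ℓ ℓ' hlt hle h => by
    have := c.eq_of_nested_crossings hB hx (hO hlt.le) ((hOR ℓ').1.le.trans (hOR ℓ').2.1.le)
      (hR hlt.le) (hOR ℓ).2.2.1 (congrArg Prod.fst h) (congrArg Prod.snd h)
    have hlen := congrArg FreeGroup.norm this
    simp only [v, norm_geodesicVertex] at hlen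
    omega
  simp only [Finset.mem_range] at h₁ h₂
  rcases Nat.lt_or_gt_of_ne hne with h | h
  · exact key ℓ₁ ℓ₂ h (by omega) heq
  · exact key ℓ₂ ℓ₁ h (by omega) heq.symm

theorem trace_shift (j k : ℕ) :
    c.trace (fun k => x (j + k)) k = (c.trace x j)⁻¹ * c.trace x (j + k) := by
  rw [inv_trace_mul_trace, trace, add_zero]

/-- The projection of a walk to the geodesic joining its endpoints is monotone up to a bounded
error, because every later point stays close to the geodesic from an earlier one. -/
theorem exists_gromov_trace_le_add (hS : S.Finite) (hB : BoundedFactorizations S) :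
    ∃ K, ∀ (x : ℕ → G) (n : ℕ), IsWalk S n x → ∀ j' j, j' ≤ j → j ≤ n →
      gromov (c.trace x j') (c.trace x n) ≤ gromov (c.trace x j) (c.trace x n) + K := by
  obtain ⟨K, hK⟩ := c.exists_norm_trace_le_gromov_add hS hB
  refine ⟨K, fun x n hx j' j hj'j hjn => gromov_le_gromov_add_of_norm_le ?_⟩
  have h := hK _ _ (hx.shift j') (j - j') (by omega)
  rwa [trace_shift, trace_shift, Nat.add_sub_cancel' hj'j, Nat.add_sub_cancel' (hj'j.trans hjn)]
    at h

/-- How far along the geodesic from `1` to `c.trace x n` the walk `x` has progressed by time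
`k`, made monotone by taking running maxima. -/
noncomputable def progress (x : ℕ → G) (n : ℕ) : ℕ →o ℕ :=
  partialSups fun k => gromov (c.trace x k) (c.trace x n)

theorem progress_zero : c.progress x n 0 = 0 := by
  simp [progress, trace_zero, gromov_one_left]

theorem gromov_le_progress {j k : ℕ} (h : j ≤ k) :
    gromov (c.trace x j) (c.trace x n) ≤ c.progress x n k :=
  le_partialSups_of_le (fun k => gromov (c.trace x k) (c.trace x n)) h

theorem progress_self : c.progress x n n = (c.trace x n).norm :=
  le_antisymm (partialSups_le _ _ _ fun _ _ => gromov_le_norm_right _ _)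
    ((gromov_self _).symm.le.trans (c.gromov_le_progress le_rfl))

theorem progress_le_gromov_add {K : ℕ}
    (hK : ∀ j' j, j' ≤ j → j ≤ n →
      gromov (c.trace x j') (c.trace x n) ≤ gromov (c.trace x j) (c.trace x n) + K)
    {k : ℕ} (hk : k ≤ n) : c.progress x n k ≤ gromov (c.trace x k) (c.trace x n) + K :=
  partialSups_le _ _ _ fun j hj => hK j k hj hk

theorem progress_succ_le {L : ℕ} (hL : ∀ d ∈ c.steps S, d.norm ≤ L) (hx : IsWalk S n x) {k : ℕ}
    (hk : k < n) : c.progress x n (k + 1) ≤ c.progress x n k + L := by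
  refine partialSups_le _ _ _ fun j hj => ?_
  rcases hj.lt_or_eq with hj | rfl
  · exact (c.gromov_le_progress (by omega)).trans (Nat.le_add_right _ _)
  · exact (gromov_le_gromov_add_norm _ _ _).trans
      (add_le_add (c.gromov_le_progress le_rfl) (hL _ (c.trace_step_mem hx hk)))

theorem trace_eq_trace {y : ℕ → G} {n₁ n₂ : ℕ} (h0 : x 0 = y 0) (hend : x n₁ = y n₂) :
    c.trace x n₁ = c.trace y n₂ := by
  simp only [trace, h0, hend]

/-- Both walks stay near the geodesic joining their common endpoints, and close progress means
close projections to it. -/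
theorem exists_finite_inv_mul_of_progress_near (hS : S.Finite) (hB : BoundedFactorizations S) :
    ∃ (L : ℕ) (F : Set G), F.Finite ∧
      (∀ x n, IsWalk S n x → ∀ k < n, c.progress x n (k + 1) ≤ c.progress x n k + L) ∧
      ∀ (x y : ℕ → G) (n₁ n₂ : ℕ), IsWalk S n₁ x → IsWalk S n₂ y → x 0 = y 0 → x n₁ = y n₂ →
        ∀ d ≤ n₁, ∀ e ≤ n₂, c.progress x n₁ d ≤ c.progress y n₂ e + L →
          c.progress y n₂ e ≤ c.progress x n₁ d + L → (x d)⁻¹ * y e ∈ F := by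
  obtain ⟨J, hJ, hDJ⟩ := exists_finite_subset_letterSubgroup (c.finite_steps hS)
  obtain ⟨L, hL⟩ := ((c.finite_steps hS).image FreeGroup.norm).bddAbove
  replace hL : ∀ d ∈ c.steps S, d.norm ≤ L := fun d hd => hL ⟨d, hd, rfl⟩
  obtain ⟨K₁, hK₁⟩ := c.exists_norm_trace_le_gromov_add hS hB
  obtain ⟨K₂, hK₂⟩ := c.exists_gromov_trace_le_add hS hB
  refine ⟨L, _, c.finite_inv_mul (finite_letterSubgroup_norm_le hJ (2 * K₁ + (L + K₂))),
    fun x n hx k hk => c.progress_succ_le hL hx hk,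
    fun x y n₁ n₂ hx hy h0 hend d hd e he h₁ h₂ => ⟨x d, y e, ?_, rfl⟩⟩
  have hcoord : (c.coord (x d))⁻¹ * c.coord (y e) = (c.trace x d)⁻¹ * c.trace y e := by
    simp only [trace, h0]; group
  rw [hcoord]
  refine ⟨mul_mem (inv_mem (c.trace_mem_letterSubgroup hDJ hx hd))
    (c.trace_mem_letterSubgroup hDJ hy he), ?_⟩
  have hdevx := hK₁ x _ hx d hd
  have hdevy := hK₁ y _ hy e he
  have hdipx := c.progress_le_gromov_add (hK₂ x _ hx) hd
  have hdipy := c.progress_le_gromov_add (hK₂ y _ hy) he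
  have hgx := c.gromov_le_progress (x := x) (n := n₁) (le_refl d)
  have hgy := c.gromov_le_progress (x := y) (n := n₂) (le_refl e)
  rw [← c.trace_eq_trace h0 hend] at hdevy hdipy hgy
  exact norm_inv_mul_le_of_near_geodesic hdevx hdevy (by omega) (by omega)

end VirtuallyFreeData

theorem exists_finite_interleaving {G : Type u} [Group G] (hG : VirtuallyFree G)
    {S : Set G} (hS : S.Finite) (hB : BoundedFactorizations S) {A : Type*} (f : A → G)
    (hf : ∀ a, f a ∈ S) :
    ∃ F : Set G, F.Finite ∧ ∀ us vs : List A, (us.map f).prod = (vs.map f).prod →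
      ∃ w : List (A ⊕ A), w.filterMap Sum.getLeft? = us ∧ w.filterMap Sum.getRight? = vs ∧
        ∀ p, p <+: w →
          (((p.filterMap Sum.getLeft?).map f).prod)⁻¹ * ((p.filterMap Sum.getRight?).map f).prod
            ∈ F := by
  obtain ⟨c⟩ := VirtuallyFreeData.nonempty_of_virtuallyFree hG
  obtain ⟨L, F, hF, hstep, hnear⟩ := c.exists_finite_inv_mul_of_progress_near hS hB
  refine ⟨F, hF, fun us vs huv => ?_⟩
  have hwalk : ∀ l : List A, IsWalk S l.length fun k => ((l.map f).take k).prod := fun l => by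
    simpa using isWalk_prod_take (l := l.map f) (by simpa using fun a _ => hf a)
  set x := fun k => ((us.map f).take k).prod
  set y := fun k => ((vs.map f).take k).prod
  have h0 : x 0 = y 0 := by simp [x, y]
  have hend : x us.length = y vs.length := by
    have hu : (us.map f).take us.length = us.map f := take_of_length_le (by simp)
    have hv : (vs.map f).take vs.length = vs.map f := take_of_length_le (by simp)
    simpa only [x, y, hu, hv] using huv
  obtain ⟨w, hl, hr, hw⟩ := exists_interleaving_near us vs (c.progress x us.length).monotone
    (c.progress y vs.length).monotone (hstep _ _ (hwalk us)) (hstep _ _ (hwalk vs))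
    (by simp only [c.progress_zero])
    (by rw [c.progress_self, c.progress_self, c.trace_eq_trace h0 hend])
  refine ⟨w, hl, hr, fun p hp => ?_⟩
  have hpl := prefix_iff_eq_take.1 (hl ▸ hp.filterMap Sum.getLeft?)
  have hpr := prefix_iff_eq_take.1 (hr ▸ hp.filterMap Sum.getRight?)
  rw [hpl, hpr, map_take, map_take]
  exact hnear _ _ _ _ (hwalk us) (hwalk vs) h0 hend _ (hl ▸ (hp.filterMap _).length_le) _
    (hr ▸ (hp.filterMap _).length_le) (hw p hp).1 (hw p hp).2

theorem toList_proj₁ {A : Type*} (w : FreeMonoid (A ⊕ A)) :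
    (proj₁ w).toList = w.toList.filterMap Sum.getLeft? := by
  induction w using FreeMonoid.inductionOn' with
  | one => rfl
  | of_mul a w ih =>
    rw [map_mul, FreeMonoid.toList_mul, ih, FreeMonoid.toList_of_mul, filterMap_cons]
    cases a <;> rfl

theorem toList_proj₂ {A : Type*} (w : FreeMonoid (A ⊕ A)) :
    (proj₂ w).toList = w.toList.filterMap Sum.getRight? := by
  induction w using FreeMonoid.inductionOn' with
  | one => rfl
  | of_mul a w ih =>
    rw [map_mul, FreeMonoid.toList_mul, ih, FreeMonoid.toList_of_mul, filterMap_cons]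
    cases a <;> rfl

end BoundedRelationPaths

theorem bounded_relation_paths_of_graded_general
    (G : Type u) [Group G] (hG : VirtuallyFree G)
    (A : Finset G)
    (S : Finset G) (hS1 : (S : Set G) ⊆ {g : G | g ≠ 1})
    (hgraded : IsGraded (Submonoid.closure (S : Set G)))
    (α : FreeMonoid S →* G) (hα : α = FreeMonoid.lift (fun s : S => (s : G))) :
    ∃ C : ℕ, 0 < C ∧
      ∀ u v : FreeMonoid S, α u = α v →
        ∃ w : FreeMonoid (S ⊕ S), proj₁ w = u ∧ proj₂ w = v ∧
          ∀ p : FreeMonoid (S ⊕ S), FreeMonoid.toList p <+: FreeMonoid.toList w →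
            wordLength (A : Set G) ((α (proj₁ p))⁻¹ * α (proj₂ p)) ≤ C := by
  open BoundedRelationPaths in
  obtain ⟨F, hF, hinter⟩ := exists_finite_interleaving hG S.finite_toSet
    (boundedFactorizations_of_isGraded (fun h => hS1 h rfl) hgraded) (fun s : S => (s : G))
    fun s => s.2
  have hα' : ∀ u, α u = (u.toList.map fun s : S => (s : G)).prod := fun u => by
    rw [hα, FreeMonoid.lift_apply]
  refine ⟨hF.toFinset.sup (wordLength (A : Set G)) + 1, Nat.succ_pos _, fun u v huv => ?_⟩
  obtain ⟨w, hl, hr, hw⟩ := hinter u.toList v.toList (by rw [← hα', ← hα', huv])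
  refine ⟨FreeMonoid.ofList w, ?_, ?_, fun p hp => ?_⟩
  · exact FreeMonoid.toList.injective (by rw [toList_proj₁, FreeMonoid.toList_ofList, hl])
  · exact FreeMonoid.toList.injective (by rw [toList_proj₂, FreeMonoid.toList_ofList, hr])
  rw [FreeMonoid.toList_ofList] at hp
  rw [hα', hα', toList_proj₁, toList_proj₂]
  exact Nat.le_succ_of_le (Finset.le_sup (hF.mem_toFinset.2 (hw _ hp)))

theorem bounded_relation_paths_of_graded
    (G : Type u) [Group G] (hG : VirtuallyFree G)
    (A : Finset G) (hA : Subgroup.closure (A : Set G) = ⊤)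
    (S : Finset G) (hS1 : (S : Set G) ⊆ {g : G | g ≠ 1})
    (hgraded : IsGraded (Submonoid.closure (S : Set G)))
    (α : FreeMonoid S →* G) (hα : α = FreeMonoid.lift (fun s : S => (s : G))) :
    ∃ C : ℕ, 0 < C ∧
      ∀ u v : FreeMonoid S, α u = α v →
        ∃ w : FreeMonoid (S ⊕ S), proj₁ w = u ∧ proj₂ w = v ∧
          ∀ p : FreeMonoid (S ⊕ S), FreeMonoid.toList p <+: FreeMonoid.toList w →
            wordLength (A : Set G) ((α (proj₁ p))⁻¹ * α (proj₂ p)) ≤ C :=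
  bounded_relation_paths_of_graded_general G hG A S hS1 hgraded α hα
end

section
/- Let G be a group, X a finite alphabet, and β : X* → G × G a monoid homomorphism from the free monoid on X, with components β₁ and β₂. Let N be a nondeterministic finite automaton over X with finite state set Q, a unique initial state q₀, accepting states T, and transition relation E ⊆ Q × X × Q, and assume N is trim: every state lies on some successful path, i.e., for every q ∈ Q there are words u, v ∈ X* such that q is reachable from q₀ reading u and some state of T is reachable from q reading v. Then β₁(w) = β₂(w) for every word w accepted by N if and only if there exists a function λ : Q → G with λ(q₀) = 1, λ(t) = 1 for every t ∈ T, and λ(q) = β₁(x)⁻¹ · λ(p) · β₂(x) for every transition (p, x, q) ∈ E. -/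
/-! Write `d(g) = g₁⁻¹ g₂` for `g ∈ G × G`, so that `d(g h) = h₁⁻¹ d(g) h₂` and `d(g) = 1` iff
`g₁ = g₂`. A potential `λ` is thus transported along every path, `λ(q) = β₁(w)⁻¹ λ(p) β₂(w)`,
which from `λ(q₀) = λ(t) = 1` gives `d(β(w)) = 1` on accepted words. Conversely, when all
accepted words lie on the diagonal, trimness makes `λ(q) := d(β(u))`, for any path `u` from `q₀`
to `q`, well defined: if `v` leads from `q` to `T`, then `d(β(u)) = β₁(v) β₂(v)⁻¹`. -/

/-- `Reaches E p w q` holds if the automaton with transition relation `E`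
can go from state `p` to state `q` reading the word `w`. -/
def Reaches {Q X : Type*} (E : Set (Q × X × Q)) : Q → List X → Q → Prop
  | p, [], q => p = q
  | p, x :: w, q => ∃ r : Q, (p, x, r) ∈ E ∧ Reaches E r w q

namespace Reaches

variable {Q X : Type*} {E : Set (Q × X × Q)}

theorem append {u v : List X} {p q r : Q} (hu : Reaches E p u q) (hv : Reaches E q v r) :
    Reaches E p (u ++ v) r := by
  induction u generalizing p with
  | nil => cases hu; exact hv
  | cons x w ih =>
    obtain ⟨s, hs, hw⟩ := hu
    exact ⟨s, hs, ih hw⟩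

theorem snoc {u : List X} {x : X} {p q r : Q} (hu : Reaches E p u q) (hx : (q, x, r) ∈ E) :
    Reaches E p (u ++ [x]) r :=
  hu.append ⟨r, hx, rfl⟩

end Reaches

section Potential

variable {G : Type*} [Group G]

theorem Prod.fst_inv_mul_mul_snd_mul (g h : G × G) (a : G) :
    (g * h).1⁻¹ * a * (g * h).2 = h.1⁻¹ * (g.1⁻¹ * a * g.2) * h.2 := by
  simp only [Prod.fst_mul, Prod.snd_mul]
  group

theorem Prod.fst_inv_mul_snd_mul (g h : G × G) :
    (g * h).1⁻¹ * (g * h).2 = h.1⁻¹ * (g.1⁻¹ * g.2) * h.2 := by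
  simpa using Prod.fst_inv_mul_mul_snd_mul g h 1

theorem Prod.fst_inv_mul_snd_eq_of_fst_mul_eq_snd_mul {g h : G × G}
    (hgh : (g * h).1 = (g * h).2) : g.1⁻¹ * g.2 = h.1 * h.2⁻¹ := by
  rw [inv_mul_eq_iff_eq_mul, ← mul_assoc, eq_mul_inv_iff_mul_eq]
  exact hgh.symm

variable {X Q : Type*} (β : FreeMonoid X →* G × G) {E : Set (Q × X × Q)}

theorem Reaches.potential_eq {lam : Q → G}
    (hlam : ∀ (p : Q) (x : X) (q : Q), (p, x, q) ∈ E →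
      lam q = (β (FreeMonoid.of x)).1⁻¹ * lam p * (β (FreeMonoid.of x)).2)
    {w : List X} {p q : Q} (hw : Reaches E p w q) :
    lam q = (β (FreeMonoid.ofList w)).1⁻¹ * lam p * (β (FreeMonoid.ofList w)).2 := by
  induction w generalizing p with
  | nil => cases hw; simp
  | cons x w ih =>
    obtain ⟨r, hr, hrw⟩ := hw
    rw [ih hrw, hlam p x r hr, FreeMonoid.ofList_cons, map_mul, Prod.fst_inv_mul_mul_snd_mul]

theorem fst_eq_snd_of_reaches_of_potential {lam : Q → G} {p q : Q} (hp : lam p = 1)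
    (hq : lam q = 1)
    (hlam : ∀ (p : Q) (x : X) (q : Q), (p, x, q) ∈ E →
      lam q = (β (FreeMonoid.of x)).1⁻¹ * lam p * (β (FreeMonoid.of x)).2)
    {w : List X} (hw : Reaches E p w q) :
    (β (FreeMonoid.ofList w)).1 = (β (FreeMonoid.ofList w)).2 := by
  have h := hw.potential_eq β hlam
  rwa [hp, hq, mul_one, eq_comm, inv_mul_eq_one] at h

theorem exists_potential_of_fst_eq_snd {q₀ : Q} {T : Set Q}
    (htrim : ∀ q : Q, ∃ (u v : List X) (t : Q),
      Reaches E q₀ u q ∧ t ∈ T ∧ Reaches E q v t)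
    (hacc : ∀ w : List X, (∃ t ∈ T, Reaches E q₀ w t) →
      (β (FreeMonoid.ofList w)).1 = (β (FreeMonoid.ofList w)).2) :
    ∃ lam : Q → G, lam q₀ = 1 ∧ (∀ t ∈ T, lam t = 1) ∧
      ∀ (p : Q) (x : X) (q : Q), (p, x, q) ∈ E →
        lam q = (β (FreeMonoid.of x)).1⁻¹ * lam p * (β (FreeMonoid.of x)).2 := by
  choose u v t hu ht hv using htrim
  let lam (q : Q) : G := (β (FreeMonoid.ofList (v q))).1 * (β (FreeMonoid.ofList (v q))).2⁻¹
  have lam_eq {q : Q} {w : List X} (hw : Reaches E q₀ w q) :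
      lam q = (β (FreeMonoid.ofList w)).1⁻¹ * (β (FreeMonoid.ofList w)).2 := by
    refine (Prod.fst_inv_mul_snd_eq_of_fst_mul_eq_snd_mul ?_).symm
    rw [← map_mul, ← FreeMonoid.ofList_append]
    exact hacc _ ⟨t q, ht q, hw.append (hv q)⟩
  refine ⟨lam, ?_, fun s hs => ?_, fun p x q hpq => ?_⟩
  · simpa using lam_eq (q := q₀) (w := []) rfl
  · rw [lam_eq (hu s), hacc _ ⟨s, hs, hu s⟩, inv_mul_cancel]
  · rw [lam_eq ((hu p).snoc hpq), lam_eq (hu p), FreeMonoid.ofList_append, map_mul,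
      Prod.fst_inv_mul_snd_mul, FreeMonoid.ofList_singleton]

end Potential

theorem accepted_words_in_diagonal_iff_potential_general
    (G : Type*) [Group G] (X : Type)
    (β : FreeMonoid X →* G × G)
    (Q : Type) (q₀ : Q) (T : Set Q) (E : Set (Q × X × Q))
    (htrim : ∀ q : Q, ∃ (u v : List X) (t : Q),
      Reaches E q₀ u q ∧ t ∈ T ∧ Reaches E q v t) :
    (∀ w : List X, (∃ t ∈ T, Reaches E q₀ w t) →
        (β (FreeMonoid.ofList w)).1 = (β (FreeMonoid.ofList w)).2) ↔
      ∃ lam : Q → G, lam q₀ = 1 ∧ (∀ t ∈ T, lam t = 1) ∧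
        ∀ (p : Q) (x : X) (q : Q), (p, x, q) ∈ E →
          lam q = (β (FreeMonoid.of x)).1⁻¹ * lam p * (β (FreeMonoid.of x)).2 := by
  refine ⟨exists_potential_of_fst_eq_snd β htrim, ?_⟩
  rintro ⟨lam, h₀, hT, hlam⟩ w ⟨t, ht, hw⟩
  exact fst_eq_snd_of_reaches_of_potential β h₀ (hT t ht) hlam hw

theorem accepted_words_in_diagonal_iff_potential
    (G : Type*) [Group G] (X : Type) [Fintype X]
    (β : FreeMonoid X →* G × G)
    (Q : Type) [Fintype Q] (q₀ : Q) (T : Set Q) (E : Set (Q × X × Q))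
    (htrim : ∀ q : Q, ∃ (u v : List X) (t : Q),
      Reaches E q₀ u q ∧ t ∈ T ∧ Reaches E q v t) :
    (∀ w : List X, (∃ t ∈ T, Reaches E q₀ w t) →
        (β (FreeMonoid.ofList w)).1 = (β (FreeMonoid.ofList w)).2) ↔
      ∃ lam : Q → G, lam q₀ = 1 ∧ (∀ t ∈ T, lam t = 1) ∧
        ∀ (p : Q) (x : X) (q : Q), (p, x, q) ∈ E →
          lam q = (β (FreeMonoid.of x)).1⁻¹ * lam p * (β (FreeMonoid.of x)).2 :=
  accepted_words_in_diagonal_iff_potential_general G X β Q q₀ T E htrim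
end

section
/- Let F be a free group and let M be a finitely generated submonoid of F. If M is a Kleene monoid, i.e., every rational subset of M is recognizable, then M is graded. -/
universe u

/-- A subset `R` of a monoid `N` is recognizable if it is the full preimage of its
image under a monoid homomorphism to a finite monoid. -/
def IsRecognizableSubset {N : Type*} [Monoid N] (R : Set N) : Prop :=
  ∃ (K : Type) (_ : Monoid K) (_ : Finite K) (θ : N →* K), R = θ ⁻¹' (θ '' R)

/-!
Proof idea: if the set of powers of a unit `u` is recognized by `θ` into a finite monoid, then
`θ u` has finite order, so `θ u⁻¹` is a power of `θ u` and hence `u⁻¹` is a power of `u`; in a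
torsion-free monoid such as a submonoid of a free group, this leaves `1` as the only unit.
Encode `M` by the nontrivial elements of a finite generating set. Recognizability of `{m}` makes
the words evaluating to `m` a regular language. By the pumping lemma, a long such word has a
nonempty factor that can be deleted without leaving the language. By cancellation this factor
evaluates to `1`, which is impossible when there are no nontrivial units and no letter evaluates
to `1`. So the fibres contain only words of bounded length.
-/

theorem Language.isRegular_singleton {α : Type*} (w : List α) :
    ({w} : Language α).IsRegular := by
  refine IsRegular.of_finite_range_leftQuotient <|
    ((w.tails.finite_toSet.image fun s => ({s} : Language α)).insert 0).subset ?_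
  rintro _ ⟨x, rfl⟩
  by_cases hx : x <+: w
  · obtain ⟨s, rfl⟩ := hx
    refine Or.inr ⟨s, (List.mem_tails _ _).2 (List.suffix_append x s), ?_⟩
    ext y
    exact (List.append_right_inj x).symm
  · exact Or.inl (Set.eq_empty_of_forall_notMem fun y hy => hx ⟨y, hy⟩)

theorem Language.isRegular_top {α : Type*} : (⊤ : Language α).IsRegular :=
  IsRegular.of_finite_range_leftQuotient <| (Set.finite_singleton ⊤).subset <| by
    rintro _ ⟨x, rfl⟩
    exact eq_top_iff.2 fun _ _ => trivial

theorem Language.IsRegular.finite_of_forall_append_mem_eq_nil {α : Type*} [Finite α]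
    {L : Language α} (hL : L.IsRegular)
    (h : ∀ a b c, a ++ b ++ c ∈ L → a ++ c ∈ L → b = []) : (L : Set (List α)).Finite := by
  obtain ⟨σ, _, D, rfl⟩ := hL
  refine (List.finite_length_lt α (Fintype.card σ)).subset fun x hx =>
    show x.length < _ from lt_of_not_ge fun hlen => ?_
  obtain ⟨a, b, c, rfl, -, hb, hpump⟩ := D.pumping_lemma hx hlen
  refine hb (h a b c hx (hpump ?_))
  exact Language.mem_mul.2 ⟨a, Language.mem_mul.2 ⟨a, rfl, [], Language.nil_mem_kstar _,
    List.append_nil a⟩, c, rfl, rfl⟩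

section Monoid

variable {N : Type*} [Monoid N]

theorem isRationalSubset_singleton (m : N) : IsRationalSubset ({m} : Set N) :=
  ⟨Unit, inferInstance, FreeMonoid.lift fun _ => m, {[()]}, Language.isRegular_singleton _,
    Set.image_singleton.trans (by simp)⟩

theorem isRationalSubset_range_pow (u : N) : IsRationalSubset (Set.range (u ^ · : ℕ → N)) := by
  refine ⟨Unit, inferInstance, FreeMonoid.lift fun _ => u, Set.univ, Language.isRegular_top, ?_⟩
  have hlen : Function.Surjective (List.length : List Unit → ℕ) :=
    fun n => ⟨List.replicate n (), List.length_replicate⟩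
  refine Set.image_univ.trans ?_
  rw [← hlen.range_comp]
  congr 1
  ext w
  simp [FreeMonoid.lift_ofList, List.map_const', List.prod_replicate]

theorem IsRecognizableSubset.isRegular_preimage {R : Set N} (hR : IsRecognizableSubset R)
    {A : Type*} (φ : FreeMonoid A →* N) :
    Language.IsRegular {w : List A | φ (FreeMonoid.ofList w) ∈ R} := by
  obtain ⟨K, _, _, θ, hθ⟩ := hR
  let D : DFA A K := ⟨fun k a => k * θ (φ (FreeMonoid.of a)), 1, θ '' R⟩
  have hD : ∀ w k, D.evalFrom k w = k * θ (φ (FreeMonoid.ofList w)) := by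
    intro w
    induction w with
    | nil => simp [DFA.evalFrom_nil]
    | cons a w ih => intro k; simp [DFA.evalFrom_cons, ih, D, mul_assoc]
  refine ⟨K, Fintype.ofFinite K, D, ?_⟩
  ext w
  rw [DFA.mem_accepts, DFA.eval, hD, one_mul]
  exact (Set.ext_iff.1 hθ _).symm

theorem IsRecognizableSubset.isOfFinOrder_of_isUnit {u : N}
    (hrec : IsRecognizableSubset (Set.range (u ^ · : ℕ → N))) (hu : IsUnit u) :
    IsOfFinOrder u := by
  obtain ⟨K, _, _, θ, hθ⟩ := hrec
  obtain ⟨U, rfl⟩ := hu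
  obtain ⟨d, hd, hpow⟩ := (isOfFinOrder_of_finite (Units.map θ U)).exists_pow_eq_one
  have hinv : ((U⁻¹ : Nˣ) : N) ∈ Set.range ((U : N) ^ · : ℕ → N) := by
    rw [hθ]
    refine ⟨(U : N) ^ (d - 1), ⟨d - 1, rfl⟩, ?_⟩
    have : Units.map θ U ^ (d - 1) = (Units.map θ U)⁻¹ :=
      eq_inv_of_mul_eq_one_left (by rw [← pow_succ, Nat.sub_add_cancel hd, hpow])
    simpa using congrArg Units.val this
  obtain ⟨n, hn : (U : N) ^ n = _⟩ := hinv
  exact isOfFinOrder_iff_pow_eq_one.2 ⟨n + 1, n.succ_pos, by rw [pow_succ, hn, Units.inv_mul]⟩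

theorem subsingleton_units_of_isRecognizableSubset_range_pow [IsMulTorsionFree N]
    (h : ∀ u : N, IsRecognizableSubset (Set.range (u ^ · : ℕ → N))) : Subsingleton Nˣ :=
  subsingleton_of_forall_eq 1 fun U =>
    Units.ext ((h U).isOfFinOrder_of_isUnit U.isUnit).eq_one'

end Monoid

theorem FreeMonoid.eq_one_of_lift_eq_one {N X : Type*} [Monoid N] [IsLeftCancelMul N]
    [Subsingleton Nˣ] {g : X → N} (hg : ∀ x, g x ≠ 1) {w : FreeMonoid X} (hw : lift g w = 1) : w = 1 := by
  induction w using FreeMonoid.inductionOn' with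
  | one => rfl
  | of_mul x w _ =>
    rw [map_mul, lift_eval_of] at hw
    have hinv : lift g w * g x = 1 := mul_left_cancel (a := g x) <| by
      rw [← mul_assoc, hw, one_mul, mul_one]
    exact (hg x (congrArg Units.val (Subsingleton.elim (⟨g x, _, hw, hinv⟩ : Nˣ) 1))).elim

section CancelMul

variable {N : Type*} [Monoid N] [IsCancelMul N] [Subsingleton Nˣ]

theorem FreeMonoid.finite_lift_preimage_singleton {X : Type*} [Finite X] {g : X → N}
    (hg : ∀ x, g x ≠ 1) {m : N} (hm : IsRecognizableSubset ({m} : Set N)) :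
    (lift g ⁻¹' {m}).Finite := by
  have hfin := (hm.isRegular_preimage (lift g)).finite_of_forall_append_mem_eq_nil
    fun a b c habc hac => by
      change lift g (ofList (a ++ b ++ c)) = m at habc
      change lift g (ofList (a ++ c)) = m at hac
      rw [ofList_append, ofList_append, map_mul, map_mul] at habc
      rw [ofList_append, map_mul] at hac
      rw [← hac, mul_assoc, mul_right_inj, mul_eq_right] at habc
      exact ofList.injective (eq_one_of_lift_eq_one hg habc)
  exact hfin.preimage (f := toList) toList.injective.injOn

theorem isGraded_of_forall_isRecognizableSubset_singleton [Monoid.FG N]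
    (h : ∀ m : N, IsRecognizableSubset ({m} : Set N)) : IsGraded N := by
  obtain ⟨S, hS, hSfin⟩ := Monoid.fg_iff.1 ‹Monoid.FG N›
  have : Finite ↥(S \ {1}) := hSfin.sdiff.to_subtype
  let e := Finite.equivFin ↥(S \ {1})
  let g : Fin (Nat.card ↥(S \ {1})) → N := fun i => e.symm i
  have hg : Set.range g = S \ {1} := by
    rw [show g = Subtype.val ∘ e.symm from rfl, e.symm.surjective.range_comp, Subtype.range_coe]
  refine ⟨_, inferInstance, FreeMonoid.lift g, ?_, fun m => ?_⟩
  · rw [← MonoidHom.mrange_eq_top, FreeMonoid.mrange_lift, hg, ← top_le_iff, ← hS,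
      ← Submonoid.closure_insert_one (S \ {1}), Set.insert_sdiff_singleton]
    exact Submonoid.closure_mono (Set.subset_insert _ _)
  · exact FreeMonoid.finite_lift_preimage_singleton (fun i => (e.symm i).2.2) (h m)

end CancelMul

theorem graded_of_kleene_submonoid_of_freeGroup
    (F : Type u) [Group F] (hF : ∃ ι : Type u, Nonempty (F ≃* FreeGroup ι))
    (M : Submonoid F) (hM : M.FG)
    (hKleene : ∀ R : Set M, IsRationalSubset R → IsRecognizableSubset R) :
    IsGraded M := by
  obtain ⟨ι, ⟨e⟩⟩ := hF
  have : IsMulTorsionFree F := e.injective.isMulTorsionFree e.toMonoidHom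
  have : IsMulTorsionFree M := Subtype.val_injective.isMulTorsionFree M.subtype
  have : Monoid.FG M := (Monoid.fg_iff_submonoid_fg M).2 hM
  have : Subsingleton Mˣ := subsingleton_units_of_isRecognizableSubset_range_pow
    fun u => hKleene _ (isRationalSubset_range_pow u)
  exact isGraded_of_forall_isRecognizableSubset_singleton
    fun m => hKleene _ (isRationalSubset_singleton m)
end

section
/- Let F be the free group on two generators a and b, and let M be the submonoid of F generated by the three elements a, b, and a⁻¹b⁻¹ab. Then M is graded. -/
theorem IsGraded.of_length_le {M : Type*} [Monoid M] {X : Type} [Finite X]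
    (α : FreeMonoid X →* M) (hα : Function.Surjective α) (w : M → ℕ)
    (hw : ∀ x, x.length ≤ w (α x)) : IsGraded M :=
  ⟨X, inferInstance, α, hα, fun m =>
    ((List.finite_length_le X (w m)).preimage FreeMonoid.toList.injective.injOn).subset
      fun x hx => (hw x).trans_eq (congrArg w hx)⟩

theorem FreeMonoid.length_le_of_superadditive {X N : Type*} [Monoid N]
    (f : FreeMonoid X →* N) (C : Submonoid N) (w : N → ℤ) (hw_one : 0 ≤ w 1)
    (hw_mul : ∀ A ∈ C, ∀ B ∈ C, w A + w B ≤ w (A * B))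
    (hf : ∀ s, f (of s) ∈ C ∧ 1 ≤ w (f (of s))) (x : FreeMonoid X) :
    (x.length : ℤ) ≤ w (f x) := by
  have hC : ∀ x, f x ∈ C := fun x =>
    x.inductionOn' (by rw [map_one]; exact C.one_mem) fun s x hx => by
      rw [map_mul]; exact C.mul_mem (hf s).1 hx
  induction x using FreeMonoid.inductionOn' with
  | one => simpa using hw_one
  | of_mul s x ih =>
    calc ((of s * x).length : ℤ) = 1 + x.length := by simp [length_mul, add_comm]
      _ ≤ w (f (of s)) + w (f x) := add_le_add (hf s).2 ih
      _ ≤ w (f (of s * x)) := by simpa using hw_mul _ (hf s).1 _ (hC x)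

theorem Submonoid.isGraded_closure_of_superadditive {M N : Type} [Monoid M] [Monoid N]
    {S : Set M} (hS : S.Finite) (φ : M →* N) (C : Submonoid N) (w : N → ℤ) (hw_one : 0 ≤ w 1)
    (hw_mul : ∀ A ∈ C, ∀ B ∈ C, w A + w B ≤ w (A * B))
    (hφ : ∀ s ∈ S, φ s ∈ C ∧ 1 ≤ w (φ s)) : IsGraded (closure S) := by
  have : Finite S := hS
  let α : FreeMonoid S →* closure S :=
    (FreeMonoid.lift (↑)).codRestrict _ fun x => closure_eq_mrange S ▸ ⟨x, rfl⟩
  refine IsGraded.of_length_le α ?_ (fun m => (w (φ m)).toNat) fun x => ?_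
  · rintro ⟨m, hm⟩
    rw [closure_eq_mrange] at hm
    obtain ⟨x, rfl⟩ := hm
    exact ⟨x, rfl⟩
  · have := FreeMonoid.length_le_of_superadditive (φ.comp (FreeMonoid.lift ((↑) : S → M))) C w
      hw_one hw_mul (fun s => by simpa using hφ s s.2) x
    exact_mod_cast this.trans (Int.self_le_toNat _)

def heis (x y z : ℤ) : Matrix (Fin 3) (Fin 3) ℤ := !![1, x, z; 0, 1, y; 0, 0, 1]

theorem heis_mul (x y z x' y' z' : ℤ) :
    heis x y z * heis x' y' z' = heis (x + x') (y + y') (z + z' + x * y') := by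
  simp only [heis, Matrix.mul_fin_three]
  ring_nf

theorem heis_zero_zero_zero : heis 0 0 0 = 1 :=
  Matrix.one_fin_three.symm

def heisUnit (x y z : ℤ) : (Matrix (Fin 3) (Fin 3) ℤ)ˣ where
  val := heis x y z
  inv := heis (-x) (-y) (x * y - z)
  val_inv := by rw [heis_mul, ← heis_zero_zero_zero]; congr 1 <;> ring
  inv_val := by rw [heis_mul, ← heis_zero_zero_zero]; congr 1 <;> ring

def heisCone : Submonoid (Matrix (Fin 3) (Fin 3) ℤ) where
  carrier := {A | ∃ x y z, 0 ≤ x ∧ 0 ≤ y ∧ 0 ≤ z ∧ heis x y z = A}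
  mul_mem' := by
    rintro _ _ ⟨x, y, z, hx, hy, hz, rfl⟩ ⟨x', y', z', hx', hy', hz', rfl⟩
    exact ⟨_, _, _, by positivity, by positivity, by positivity, (heis_mul ..).symm⟩
  one_mem' := ⟨0, 0, 0, le_rfl, le_rfl, le_rfl, heis_zero_zero_zero⟩

theorem heis_mem_heisCone {x y z : ℤ} (hx : 0 ≤ x) (hy : 0 ≤ y) (hz : 0 ≤ z) :
    heis x y z ∈ heisCone :=
  ⟨x, y, z, hx, hy, hz, rfl⟩

def heisWeight (A : Matrix (Fin 3) (Fin 3) ℤ) : ℤ := A 0 1 + A 1 2 + A 0 2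

theorem heisWeight_heis (x y z : ℤ) : heisWeight (heis x y z) = x + y + z := by
  simp [heisWeight, heis]

theorem heisWeight_add_le_mul {A B : Matrix (Fin 3) (Fin 3) ℤ} (hA : A ∈ heisCone)
    (hB : B ∈ heisCone) : heisWeight A + heisWeight B ≤ heisWeight (A * B) := by
  obtain ⟨x, y, z, hx, -, -, rfl⟩ := hA
  obtain ⟨x', y', z', -, hy', -, rfl⟩ := hB
  rw [heis_mul, heisWeight_heis, heisWeight_heis, heisWeight_heis]
  nlinarith

def heisRep : FreeGroup (Fin 2) →* Matrix (Fin 3) (Fin 3) ℤ :=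
  (Units.coeHom _).comp (FreeGroup.lift ![heisUnit 1 0 0, heisUnit 0 1 0])

theorem heisRep_of_zero : heisRep (FreeGroup.of 0) = heis 1 0 0 := by
  simp [heisRep, heisUnit]

theorem heisRep_of_one : heisRep (FreeGroup.of 1) = heis 0 1 0 := by
  simp [heisRep, heisUnit]

theorem heisRep_commutator :
    heisRep ((FreeGroup.of 0)⁻¹ * (FreeGroup.of 1)⁻¹ * FreeGroup.of 0 * FreeGroup.of 1) =
      heis 0 0 1 := by
  simp only [map_mul, map_inv, heisRep, MonoidHom.comp_apply]
  simp [heisUnit, heis_mul]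

theorem commutator_example_graded :
    IsGraded (Submonoid.closure
      {FreeGroup.of (0 : Fin 2), FreeGroup.of 1,
        (FreeGroup.of (0 : Fin 2))⁻¹ * (FreeGroup.of 1)⁻¹ *
          FreeGroup.of 0 * FreeGroup.of 1}) := by
  refine Submonoid.isGraded_closure_of_superadditive (Set.toFinite _) heisRep heisCone heisWeight
    (by simp [heisWeight]) (fun A hA B hB => heisWeight_add_le_mul hA hB) ?_
  rintro s (rfl | rfl | rfl)
  · rw [heisRep_of_zero, heisWeight_heis]
    exact ⟨heis_mem_heisCone zero_le_one le_rfl le_rfl, by norm_num⟩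
  · rw [heisRep_of_one, heisWeight_heis]
    exact ⟨heis_mem_heisCone le_rfl zero_le_one le_rfl, by norm_num⟩
  · rw [heisRep_commutator, heisWeight_heis]
    exact ⟨heis_mem_heisCone le_rfl le_rfl zero_le_one, by norm_num⟩
end

section
/- Let G be the direct product of an infinite cyclic group generated by a and a cyclic group of order 2 generated by b (so G ≅ ℤ × ℤ/2ℤ, with b² = 1 and ab = ba), and let M be the submonoid of G generated by a and ab. Then M is graded, but M does not embed into any free group: for every set ι there is no injective monoid homomorphism from M into FreeGroup ι. -/
/-- The group `ℤ × ℤ/2ℤ`, written multiplicatively. -/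
abbrev ZxZ2 : Type := Multiplicative (ℤ × ZMod 2)

/-- The generator `a = (1, 0)` of the infinite cyclic factor. -/
def genA : ZxZ2 := Multiplicative.ofAdd ((1 : ℤ), (0 : ZMod 2))

/-- The generator `b = (0, 1)` of the factor of order 2. -/
def genB : ZxZ2 := Multiplicative.ofAdd ((0 : ℤ), (1 : ZMod 2))

universe u

/-!
Grade words by the `ℤ`-coordinate: both generators `a` and `ab` have degree one, so a word of
length `n` represents an element of degree `n`, and each element has only finitely many
representatives. On the other hand `a² = (ab)²` with `a ≠ ab`, whereas square roots are unique in
a free group, free groups being torsion-free.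
-/

theorem length_le_degree_lift {G : Type*} [Monoid G] {S : Set G} (d : G →* Multiplicative ℤ)
    (hd : ∀ s ∈ S, 0 < (d s).toAdd) (w : FreeMonoid S) :
    (w.length : ℤ) ≤ (d (FreeMonoid.lift (↑) w)).toAdd := by
  induction w using FreeMonoid.inductionOn' with
  | one => simp
  | of_mul s w ih =>
    have hs := hd s s.2
    simp only [FreeMonoid.length_mul, FreeMonoid.length_of, map_mul, FreeMonoid.lift_eval_of,
      toAdd_mul]
    push_cast
    omega

theorem isGraded_closure_of_degree {G : Type} [Monoid G] {S : Set G} (hS : S.Finite)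
    (d : G →* Multiplicative ℤ) (hd : ∀ s ∈ S, 0 < (d s).toAdd) :
    IsGraded (Submonoid.closure S) := by
  let α : FreeMonoid S →* Submonoid.closure S :=
    FreeMonoid.lift fun s => ⟨s, Submonoid.subset_closure s.2⟩
  have hα : (Submonoid.closure S).subtype.comp α = FreeMonoid.lift (↑) :=
    FreeMonoid.hom_eq fun _ => rfl
  have : Finite S := hS.to_subtype
  refine ⟨S, inferInstance, α, ?_, fun m => ?_⟩
  · rintro ⟨x, hx⟩
    obtain ⟨w, rfl⟩ := (Submonoid.closure_eq_mrange S ▸ hx : x ∈ MonoidHom.mrange _)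
    exact ⟨w, Subtype.ext (DFunLike.congr_fun hα w)⟩
  · refine ((List.finite_length_le S (d m).toAdd.toNat).preimage
      FreeMonoid.toList.injective.injOn).subset fun w hw => ?_
    have hlen := length_le_degree_lift d hd w
    rw [← hα, MonoidHom.comp_apply, Set.mem_singleton_iff.mp hw,
      Submonoid.subtype_apply] at hlen
    change w.length ≤ _
    omega

theorem genA_sq_eq_mul_genB_sq : genA ^ 2 = (genA * genB) ^ 2 := by decide

theorem genA_ne_mul_genB : genA ≠ genA * genB := by decide

theorem not_isMulTorsionFree_closure_genA_mul_genB :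
    ¬IsMulTorsionFree (Submonoid.closure {genA, genA * genB}) := fun _ =>
  let x : Submonoid.closure {genA, genA * genB} := ⟨genA, Submonoid.subset_closure (by simp)⟩
  let y : Submonoid.closure {genA, genA * genB} :=
    ⟨genA * genB, Submonoid.subset_closure (by simp)⟩
  have hxy : x ^ 2 = y ^ 2 := Subtype.ext genA_sq_eq_mul_genB_sq
  genA_ne_mul_genB (congrArg Subtype.val (pow_left_injective two_ne_zero hxy))

theorem graded_not_embeddable_in_freeGroup :
    IsGraded (Submonoid.closure {genA, genA * genB}) ∧
      ∀ (ι : Type u) (f : Submonoid.closure {genA, genA * genB} →* FreeGroup ι),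
        ¬Function.Injective f := by
  refine ⟨isGraded_closure_of_degree (Set.toFinite _)
    (AddMonoidHom.toMultiplicative (AddMonoidHom.fst ℤ (ZMod 2))) ?_, fun ι f hf => ?_⟩
  · rintro s (rfl | rfl) <;> decide
  · exact not_isMulTorsionFree_closure_genA_mul_genB (hf.isMulTorsionFree f)
end
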